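/- arXiv:1507.07623 — 10 statements merged into one kernel-verified Lean document; each statement's English description precedes it below -/
import Mathlib

section
/- Let G be a finite simple graph on vertex set {1,…,n} with no isolated vertex. Then vol(G) = (1/(2n)) · Σ_{i=1}^{n} vol(G − i), where G − i denotes the induced subgraph of G on the vertex set {1,…,n} \ {i} (and vol(G − i) is the (n−1)-dimensional volume of its graph polytope). -/
open MeasureTheory

/-- The graph polytope volume: `vol(G)` is the Lebesgue volume of
`{x ∈ [0,1]^V : x_i + x_j ≤ 1 for every edge ij of G}`. -/
noncomputable def gvol {V : Type*} [Fintype V] (G : SimpleGraph V) : ℝ :=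
  (volume {x : V → ℝ | (∀ i, x i ∈ Set.Icc (0:ℝ) 1) ∧
      ∀ ⦃i j⦄, G.Adj i j → x i + x j ≤ 1}).toReal

/-- `G - i`: the induced subgraph of `G` on the vertex set with `i` removed. -/
noncomputable def delVert {n : ℕ} (G : SimpleGraph (Fin n)) (i : Fin n) :
    SimpleGraph {j : Fin n // j ≠ i} :=
  G.comap Subtype.val

/-!
Up to a null set, `P(G)` is the disjoint union over `i` of the regions where `x i` is the strict
minimum of the coordinates. Slice the region of `i` at `x i = t`: it is empty unless
`0 ≤ t < 1/2`, and then the substitution `x j = t + (1 - 2t) z j` identifies the slice with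
`P(G - i)` minus a null set, because `x j + x k ≤ 1 ↔ z j + z k ≤ 1`, and every vertex having a
neighbour forces `z j ≤ 1`. Hence the region has volume
`vol(G - i) * ∫₀^{1/2} (1 - 2t)^(n-1) dt = vol(G - i) / (2n)`.
-/

open Set

theorem MeasureTheory.Measure.addHaar_setOf_linearMap_eq_zero {E : Type*} [NormedAddCommGroup E]
    [NormedSpace ℝ E] [MeasurableSpace E] [BorelSpace E] [FiniteDimensional ℝ E] (μ : Measure E)
    [μ.IsAddHaarMeasure] {f : E →ₗ[ℝ] ℝ} (hf : f ≠ 0) : μ {x | f x = 0} = 0 :=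
  Measure.addHaar_submodule μ (LinearMap.ker f) fun h => hf (LinearMap.ker_eq_top.1 h)

section

variable {ι : Type*} [Fintype ι]

theorem volume_setOf_apply_eq_zero (i : ι) : volume {x : ι → ℝ | x i = 0} = 0 := by
  classical
  refine Measure.addHaar_setOf_linearMap_eq_zero volume
    (f := LinearMap.proj (R := ℝ) (φ := fun _ : ι => ℝ) i) fun h => ?_
  simpa using LinearMap.congr_fun h (Pi.single i 1)

theorem volume_setOf_apply_eq_apply {i j : ι} (hij : i ≠ j) :
    volume {x : ι → ℝ | x i = x j} = 0 := by
  classical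
  have := Measure.addHaar_setOf_linearMap_eq_zero volume
    (f := LinearMap.proj (R := ℝ) (φ := fun _ : ι => ℝ) i - LinearMap.proj j) fun h => by
      simpa [Pi.single_apply, hij.symm] using LinearMap.congr_fun h (Pi.single i 1)
  simpa [sub_eq_zero] using this

theorem volume_eq_sum_volume_inter_strictMin [Nonempty ι] {s : Set (ι → ℝ)}
    (hs : MeasurableSet s) : volume s = ∑ i, volume (s ∩ {x | ∀ j ≠ i, x i < x j}) := by
  set piece := fun i => s ∩ {x : ι → ℝ | ∀ j ≠ i, x i < x j}
  have hmeas : ∀ i, MeasurableSet (piece i) := fun i =>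
    hs.inter (measurableSet_setOfPred.2 (by fun_prop))
  have hdisj : Pairwise (Function.onFun Disjoint piece) := fun i j hij =>
    disjoint_left.2 fun x hi hj => lt_asymm (hi.2 j hij.symm) (hj.2 i hij)
  have hnull : volume (s \ ⋃ i, piece i) = 0 := by
    refine measure_mono_null (t := ⋃ i, ⋃ j, ⋃ (_ : i ≠ j), {x : ι → ℝ | x i = x j}) ?_
      (measure_iUnion_null fun i => measure_iUnion_null fun j =>
        measure_iUnion_null volume_setOf_apply_eq_apply)
    rintro x ⟨hxs, hx⟩
    obtain ⟨i, hi⟩ := Finite.exists_min x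
    obtain ⟨j, hji, hj⟩ : ∃ j ≠ i, ¬ x i < x j := by
      by_contra! h
      exact hx (mem_iUnion.2 ⟨i, hxs, h⟩)
    exact mem_iUnion₂.2 ⟨i, j, mem_iUnion.2 ⟨hji.symm, le_antisymm (hi j) (not_lt.1 hj)⟩⟩
  rw [← measure_eq_measure_of_null_sdiff (iUnion_subset fun i => inter_subset_left) hnull,
    measure_iUnion hdisj hmeas, tsum_fintype]

theorem volume_inter_setOf_forall_pos {s : Set (ι → ℝ)} (hs : ∀ z ∈ s, ∀ j, 0 ≤ z j) :
    volume (s ∩ {z | ∀ j, 0 < z j}) = volume s := by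
  have : s ∩ {z | ∀ j, 0 < z j} = s \ ⋃ j, {z | z j = 0} := by
    ext z
    simp only [mem_inter_iff, mem_sdiff, mem_ofPred_eq, mem_iUnion, not_exists]
    exact and_congr_right fun hz => forall_congr' fun j => (hs z hz j).lt_iff_ne'
  rw [this, measure_sdiff_null (measure_iUnion_null volume_setOf_apply_eq_zero)]

theorem volume_image_const_add_mul (t : ℝ) {c : ℝ} (hc : 0 ≤ c) (s : Set (ι → ℝ)) :
    volume ((fun z j => t + c * z j) '' s) = ENNReal.ofReal (c ^ Fintype.card ι) * volume s := by
  have : (fun (z : ι → ℝ) j => t + c * z j) = (fun z => (fun _ => t) + z) ∘ (c • ·) := rfl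
  rw [this, image_comp, image_smul, image_add_left, measure_preimage_add,
    Measure.addHaar_smul_of_nonneg volume hc, Module.finrank_fintype_fun_eq_card]

end

section

variable {ι : Type*} [DecidableEq ι]

theorem funSplitAt_symm_const_add_mul {R : Type*} [Semiring R] (i : ι) (t c : R)
    (z : {j // j ≠ i} → R) :
    (Equiv.funSplitAt i R).symm (t, fun j => t + c * z j)
      = fun v => t + c * (Equiv.funSplitAt i R).symm (0, z) v := by
  funext v
  by_cases hv : v = i <;> simp [hv]

variable [Fintype ι]

theorem measurePreserving_funSplitAt_symm (i : ι) :
    MeasurePreserving (Equiv.funSplitAt i ℝ).symm (volume.prod volume) volume := by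
  have hmeas : Measurable (Equiv.funSplitAt i ℝ).symm := by
    refine measurable_pi_lambda _ fun j => ?_
    by_cases hj : j = i <;> simp only [Equiv.funSplitAt_symm_apply, hj, dite_true, dite_false] <;>
      fun_prop
  refine ⟨hmeas, (Measure.pi_eq fun s _ => ?_).symm⟩
  have hbox : (Equiv.funSplitAt i ℝ).symm ⁻¹' univ.pi s
      = s i ×ˢ univ.pi fun j : {j // j ≠ i} => s j := by
    ext ⟨t, y⟩
    simp only [mem_preimage, mem_univ_pi, mem_prod, Subtype.forall]
    constructor
    · intro h
      exact ⟨by simpa using h i, fun j hj => by simpa [hj] using h j⟩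
    · rintro ⟨ht, hy⟩ j
      by_cases hj : j = i
      · subst hj
        simpa using ht
      · simpa [hj] using hy j hj
  rw [Measure.map_apply hmeas (MeasurableSet.univ_pi ‹_›), hbox, Measure.prod_prod,
    volume_pi_pi]
  convert (Fintype.prod_eq_mul_prod_subtype_ne (fun j => volume (s j)) i).symm

theorem volume_eq_lintegral_volume_slice (i : ι) {s : Set (ι → ℝ)} (hs : MeasurableSet s) :
    volume s = ∫⁻ t, volume {y : {j // j ≠ i} → ℝ | (Equiv.funSplitAt i ℝ).symm (t, y) ∈ s} := by
  have h := measurePreserving_funSplitAt_symm i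
  rw [← h.measure_preimage hs.nullMeasurableSet, Measure.prod_apply (hs.preimage h.measurable)]
  rfl

end

theorem lintegral_ofReal_one_sub_two_mul_pow (m : ℕ) :
    ∫⁻ t in Ico 0 (1 / 2 : ℝ), ENNReal.ofReal ((1 - 2 * t) ^ m)
      = ENNReal.ofReal (1 / (2 * (m + 1))) := by
  have hcont : Continuous fun t : ℝ => (1 - 2 * t) ^ m := by fun_prop
  have hnonneg : 0 ≤ᵐ[volume.restrict (Ioc 0 (1 / 2 : ℝ))] fun t => (1 - 2 * t) ^ m := by
    filter_upwards [ae_restrict_mem measurableSet_Ioc] with t ht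
    exact pow_nonneg (by linarith [ht.2]) m
  rw [setLIntegral_congr Ico_ae_eq_Ioc,
    ← ofReal_integral_eq_lintegral_ofReal hcont.integrableOn_Ioc hnonneg,
    ← intervalIntegral.integral_of_le (by norm_num),
    intervalIntegral.integral_comp_sub_mul (fun u => u ^ m) two_ne_zero, integral_pow]
  congr 1
  norm_num
  ring

namespace SimpleGraph

variable {V : Type*} {G : SimpleGraph V}

variable (G) in
def polytope : Set (V → ℝ) :=
  {x | (∀ i, x i ∈ Icc (0 : ℝ) 1) ∧ ∀ ⦃i j⦄, G.Adj i j → x i + x j ≤ 1}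

theorem gvol_eq_toReal_volume_polytope [Fintype V] : gvol G = (volume G.polytope).toReal := rfl

theorem measurableSet_polytope [Countable V] : MeasurableSet G.polytope :=
  measurableSet_setOfPred.2 (by fun_prop (disch := exact measurableSet_Icc))

theorem volume_polytope_ne_top [Fintype V] : volume G.polytope ≠ ⊤ := by
  refine ne_top_of_le_ne_top isCompact_Icc.measure_lt_top.ne (measure_mono (t := Icc 0 1) ?_)
  exact fun x hx => ⟨fun i => (hx.1 i).1, fun i => (hx.1 i).2⟩

theorem affine_mem_polytope_inter_strictMin_iff (hiso : ∀ v, ∃ w, G.Adj v w) {i : V} {t : ℝ}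
    (ht0 : 0 ≤ t) (ht : t < 1 / 2) {w : V → ℝ} (hwi : w i = 0) :
    (fun v => t + (1 - 2 * t) * w v) ∈ G.polytope ∩ {x | ∀ j ≠ i, x i < x j} ↔
      w ∈ G.polytope ∧ ∀ j ≠ i, 0 < w j := by
  have hc : 0 < 1 - 2 * t := by linarith
  -- the edge constraints survive because `t + t + (1 - 2 * t) = 1`
  have hedge : ∀ a b, t + (1 - 2 * t) * w a + (t + (1 - 2 * t) * w b) ≤ 1 ↔ w a + w b ≤ 1 :=
    fun a b => by
      rw [← mul_le_mul_iff_of_pos_left hc (b := w a + w b) (c := 1)]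
      constructor <;> intro h <;> linarith
  have hmin : ∀ j, t + (1 - 2 * t) * w i < t + (1 - 2 * t) * w j ↔ 0 < w j := fun j => by
    rw [hwi]
    simpa using mul_pos_iff_of_pos_left hc
  simp only [polytope, mem_inter_iff, mem_ofPred_eq, hmin, hedge]
  refine ⟨fun ⟨⟨_, hadj⟩, hpos⟩ => ⟨⟨fun v => ⟨?_, ?_⟩, hadj⟩, hpos⟩,
    fun ⟨⟨hbox, hadj⟩, hpos⟩ => ⟨⟨fun v => ⟨?_, ?_⟩, hadj⟩, hpos⟩⟩
  · by_cases hv : v = i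
    · exact hv ▸ hwi.ge
    · exact (hpos v hv).le
  · obtain ⟨u, hvu⟩ := hiso v
    have hu : 0 ≤ w u := by
      by_cases hu : u = i
      · exact hu ▸ hwi.ge
      · exact (hpos u hu).le
    linarith [hadj hvu]
  · nlinarith [(hbox v).1]
  · nlinarith [(hbox v).2]

variable [DecidableEq V] (i : V)

theorem funSplitAt_symm_zero_mem_polytope_iff {z : {j // j ≠ i} → ℝ} :
    (Equiv.funSplitAt i ℝ).symm (0, z) ∈ G.polytope ↔
      z ∈ (G.comap (Subtype.val : {j // j ≠ i} → V)).polytope := by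
  constructor
  · rintro ⟨hbox, hedge⟩
    exact ⟨fun j => by simpa [j.2] using hbox j, fun j k hjk => by simpa [j.2, k.2] using hedge hjk⟩
  · rintro ⟨hbox, hedge⟩
    have hbox' : ∀ v, (Equiv.funSplitAt i ℝ).symm (0, z) v ∈ Icc (0 : ℝ) 1 := fun v => by
      by_cases hv : v = i
      · simp [hv]
      · simpa [hv] using hbox ⟨v, hv⟩
    refine ⟨hbox', fun a b hab => ?_⟩
    by_cases ha : a = i
    · simpa [ha] using (hbox' b).2
    by_cases hb : b = i
    · simpa [hb] using (hbox' a).2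
    simpa [ha, hb] using @hedge ⟨a, ha⟩ ⟨b, hb⟩ hab

theorem slice_polytope_inter_strictMin_eq_image (hiso : ∀ v, ∃ w, G.Adj v w) {t : ℝ}
    (ht0 : 0 ≤ t) (ht : t < 1 / 2) :
    {y | (Equiv.funSplitAt i ℝ).symm (t, y) ∈ G.polytope ∩ {x | ∀ j ≠ i, x i < x j}}
      = (fun z j => t + (1 - 2 * t) * z j) ''
          ((G.comap (Subtype.val : {j // j ≠ i} → V)).polytope ∩ {z | ∀ j, 0 < z j}) := by
  have hc : 1 - 2 * t ≠ 0 := by linarith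
  have hsurj : Function.Surjective fun (z : {j // j ≠ i} → ℝ) j => t + (1 - 2 * t) * z j :=
    fun y => ⟨fun j => (y j - t) / (1 - 2 * t), by
      funext j
      simp only [mul_div_cancel₀ _ hc]
      ring⟩
  refine (image_preimage_eq _ hsurj).symm.trans (congrArg _ ?_)
  ext z
  rw [mem_preimage, mem_ofPred_eq, funSplitAt_symm_const_add_mul,
    affine_mem_polytope_inter_strictMin_iff hiso ht0 ht (by simp),
    funSplitAt_symm_zero_mem_polytope_iff]
  exact and_congr_right' ⟨fun h j => by simpa [j.2] using h j j.2,
    fun h j hj => by simpa [hj] using h ⟨j, hj⟩⟩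

theorem slice_polytope_inter_strictMin_eq_empty (hiso : ∀ v, ∃ w, G.Adj v w) {t : ℝ}
    (ht : t ∉ Ico 0 (1 / 2)) :
    {y | (Equiv.funSplitAt i ℝ).symm (t, y) ∈ G.polytope ∩ {x | ∀ j ≠ i, x i < x j}} = ∅ := by
  refine eq_empty_of_forall_notMem fun y ⟨⟨hbox, hadj⟩, hmin⟩ => ht ⟨?_, ?_⟩
  · simpa using (hbox i).1
  · obtain ⟨k, hik⟩ := hiso i
    have hedge := hadj hik
    have hlt := hmin k hik.ne'
    simp only [Equiv.funSplitAt_symm_apply, dite_true, hik.ne', dite_false] at hedge hlt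
    linarith

variable [Fintype V]

theorem volume_slice_polytope_inter_strictMin (hiso : ∀ v, ∃ w, G.Adj v w) (t : ℝ) :
    volume {y | (Equiv.funSplitAt i ℝ).symm (t, y) ∈ G.polytope ∩ {x | ∀ j ≠ i, x i < x j}}
      = (Ico 0 (1 / 2)).indicator (fun t => ENNReal.ofReal ((1 - 2 * t) ^ Fintype.card {j // j ≠ i})
          * volume (G.comap (Subtype.val : {j // j ≠ i} → V)).polytope) t := by
  by_cases ht : t ∈ Ico 0 (1 / 2)
  · rw [indicator_of_mem ht, slice_polytope_inter_strictMin_eq_image i hiso ht.1 ht.2,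
      volume_image_const_add_mul t (by linarith [ht.2]),
      volume_inter_setOf_forall_pos fun z hz j => (hz.1 j).1]
  · rw [indicator_of_notMem ht, slice_polytope_inter_strictMin_eq_empty i hiso ht, measure_empty]

theorem volume_polytope_inter_strictMin (hiso : ∀ v, ∃ w, G.Adj v w) :
    volume (G.polytope ∩ {x | ∀ j ≠ i, x i < x j})
      = ENNReal.ofReal (1 / (2 * Fintype.card V))
          * volume (G.comap (Subtype.val : {j // j ≠ i} → V)).polytope := by
  have hcard : (Fintype.card {j // j ≠ i} : ℝ) + 1 = Fintype.card V := by
    have := Fintype.card_pos_iff.2 ⟨i⟩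
    rw [Fintype.card_subtype_compl, Fintype.card_subtype_eq]
    norm_cast
    omega
  rw [volume_eq_lintegral_volume_slice i (measurableSet_polytope.inter
      (measurableSet_setOfPred.2 (by fun_prop))),
    lintegral_congr (volume_slice_polytope_inter_strictMin i hiso),
    lintegral_indicator measurableSet_Ico, lintegral_mul_const _ (by fun_prop),
    lintegral_ofReal_one_sub_two_mul_pow, hcard]

theorem volume_polytope_eq_sum [Nonempty V] (hiso : ∀ v, ∃ w, G.Adj v w) :
    volume G.polytope = ENNReal.ofReal (1 / (2 * Fintype.card V))
      * ∑ i, volume (G.comap (Subtype.val : {j // j ≠ i} → V)).polytope := by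
  rw [volume_eq_sum_volume_inter_strictMin measurableSet_polytope, Finset.mul_sum]
  exact Finset.sum_congr rfl fun i _ => volume_polytope_inter_strictMin i hiso

end SimpleGraph

/-- Recursive volume formula (RVF): if a graph `G` on `{1,…,n}` has no isolated
vertex, then `vol(G) = (1/(2n)) · Σ_{i=1}^n vol(G − i)`. -/
theorem rvf (n : ℕ) (hn : 1 ≤ n) (G : SimpleGraph (Fin n))
    (hiso : ∀ i : Fin n, ∃ j : Fin n, G.Adj i j) :
    gvol G = (1 / (2 * (n : ℝ))) * ∑ i : Fin n, gvol (delVert G i) := by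
  have : Nonempty (Fin n) := ⟨⟨0, hn⟩⟩
  rw [SimpleGraph.gvol_eq_toReal_volume_polytope, SimpleGraph.volume_polytope_eq_sum hiso,
    ENNReal.toReal_mul, ENNReal.toReal_ofReal (by positivity), Fintype.card_fin,
    ENNReal.toReal_sum fun i _ => SimpleGraph.volume_polytope_ne_top]
  rfl
end

section
/- The generating function of the volumes of the path polytopes is sec x + tan x: for all real x with |x| < π/2, Σ_{n ≥ 0} vol(L_n)·x^n = sec x + tan x (with the convention vol(L_0) = 1). -/
open MeasureTheory Real

/-- The path `L_n` on vertex set `{1,…,n}` with edges `i(i+1)`, `1 ≤ i ≤ n-1`.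
Note that `gvol (pathG 0) = 1`, matching the convention `vol(L_0) = 1`. -/
def pathG (n : ℕ) : SimpleGraph (Fin n) :=
  SimpleGraph.fromRel (fun i j => (i : ℕ) + 1 = (j : ℕ))

/-!
Let `V n t` be the volume of the slice `x₀ = t` of the polytope of the path on `n + 1` vertices,
so that `vol(L_n) = V n 0`. Integrating out the coordinate next to `x₀` gives
`V (n + 1) t = ∫₀^{1-t} V n`. The function `F x t = (cos (x t) + sin (x (1 - t))) / cos x`
solves `F = 1 + x ∫₀^{1-t} F`, so the remainders `R N = F - ∑_{n<N} V n xⁿ` satisfy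
`R (N + 1) = x ∫₀^{1-t} R N`, whence `|R N| ≤ M |x|ᴺ V N` with `M` a bound for `|F x|`.
Since `cos (π t / 2)` is an eigenfunction of `f ↦ ∫₀^{1-t} f` with eigenvalue `2 / π`, we get
`V (n + 1) ≤ (2 / π)ⁿ`; for `|x| < π / 2` the series is therefore absolutely convergent, its
remainders tend to `0`, and it sums to `F x 0 = sec x + tan x`.
-/

open Filter Topology intervalIntegral

theorem volume_eq_lintegral_volume_cons {α : Type*} [MeasureSpace α]
    [SigmaFinite (volume : Measure α)] {n : ℕ} {S : Set (Fin (n + 1) → α)} (hS : MeasurableSet S) :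
    volume S = ∫⁻ a, volume {y : Fin n → α | Fin.cons a y ∈ S} := by
  have e := (volume_preserving_piFinSuccAbove (fun _ : Fin (n + 1) => α) 0).symm
  rw [← e.measure_preimage hS.nullMeasurableSet, Measure.volume_eq_prod,
    Measure.prod_apply (hS.preimage e.measurable)]
  simp only [Set.preimage, MeasurableEquiv.piFinSuccAbove_symm_apply, Fin.insertNthEquiv,
    Equiv.coe_fn_mk, Fin.insertNth_zero, cast_eq, Set.mem_ofPred_eq]

noncomputable def tailIntegral (f : ℝ → ℝ) (t : ℝ) : ℝ := ∫ s in (0:ℝ)..1 - t, f s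

theorem continuous_tailIntegral {f : ℝ → ℝ} (hf : Continuous f) : Continuous (tailIntegral f) :=
  (continuous_primitive (fun a b => hf.intervalIntegrable a b) 0).comp
    (continuous_const.sub continuous_id)

theorem tailIntegral_nonneg {f : ℝ → ℝ} (hf : ∀ s ∈ Set.Icc (0:ℝ) 1, 0 ≤ f s) {t : ℝ}
    (ht : t ∈ Set.Icc (0:ℝ) 1) : 0 ≤ tailIntegral f t :=
  integral_nonneg (by linarith [ht.2]) fun s hs => hf s ⟨hs.1, by linarith [hs.2, ht.1]⟩

theorem tailIntegral_mono {f g : ℝ → ℝ} (hf : Continuous f) (hg : Continuous g)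
    (hfg : ∀ s ∈ Set.Icc (0:ℝ) 1, f s ≤ g s) {t : ℝ} (ht : t ∈ Set.Icc (0:ℝ) 1) :
    tailIntegral f t ≤ tailIntegral g t :=
  integral_mono_on (by linarith [ht.2]) (hf.intervalIntegrable _ _) (hg.intervalIntegrable _ _)
    fun s hs => hfg s ⟨hs.1, by linarith [hs.2, ht.1]⟩

theorem abs_tailIntegral_le (f : ℝ → ℝ) {t : ℝ} (ht : t ≤ 1) :
    |tailIntegral f t| ≤ tailIntegral (fun s => |f s|) t :=
  abs_integral_le_integral_abs (by linarith)

theorem tailIntegral_const_mul (c : ℝ) (f : ℝ → ℝ) (t : ℝ) :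
    tailIntegral (fun s => c * f s) t = c * tailIntegral f t :=
  integral_const_mul c f

theorem tailIntegral_sub {f g : ℝ → ℝ} (hf : Continuous f) (hg : Continuous g) (t : ℝ) :
    tailIntegral (fun s => f s - g s) t = tailIntegral f t - tailIntegral g t :=
  intervalIntegral.integral_sub (hf.intervalIntegrable _ _) (hg.intervalIntegrable _ _)

theorem tailIntegral_cos_pi_div_two_mul (t : ℝ) :
    tailIntegral (fun s => cos (π / 2 * s)) t = 2 / π * cos (π / 2 * t) := by
  rw [tailIntegral, integral_comp_mul_left cos (by positivity), integral_cos, mul_sub, mul_one,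
    sin_pi_div_two_sub]
  simp [smul_eq_mul]

noncomputable def pathVol : ℕ → ℝ → ℝ
  | 0 => fun _ => 1
  | n + 1 => tailIntegral (pathVol n)

@[fun_prop]
theorem continuous_pathVol (n : ℕ) : Continuous (pathVol n) := by
  induction n with
  | zero => exact continuous_const
  | succ n ih => exact continuous_tailIntegral ih

theorem pathVol_nonneg (n : ℕ) {t : ℝ} (ht : t ∈ Set.Icc (0:ℝ) 1) : 0 ≤ pathVol n t := by
  induction n generalizing t with
  | zero => exact zero_le_one
  | succ n ih => exact tailIntegral_nonneg (fun s hs => ih hs) ht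

theorem pathVol_succ_le (n : ℕ) {t : ℝ} (ht : t ∈ Set.Icc (0:ℝ) 1) :
    pathVol (n + 1) t ≤ (2 / π) ^ n * cos (π / 2 * t) := by
  induction n generalizing t with
  | zero =>
    have jordan := le_sin_mul (sub_nonneg.2 ht.2) (sub_le_self 1 ht.1)
    rw [mul_sub, mul_one, sin_pi_div_two_sub] at jordan
    simpa [pathVol, tailIntegral] using jordan
  | succ n ih =>
    calc pathVol (n + 2) t
        ≤ tailIntegral (fun s => (2 / π) ^ n * cos (π / 2 * s)) t :=
          tailIntegral_mono (continuous_pathVol _) (by fun_prop) (fun s hs => ih hs) ht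
      _ = (2 / π) ^ (n + 1) * cos (π / 2 * t) := by
          rw [tailIntegral_const_mul, tailIntegral_cos_pi_div_two_mul]; ring

theorem summable_norm_pathVol_mul_pow {x : ℝ} (hx : |x| < π / 2) {t : ℝ}
    (ht : t ∈ Set.Icc (0:ℝ) 1) : Summable fun n => ‖pathVol n t * x ^ n‖ := by
  have hq : |x| * (2 / π) < 1 := by
    rwa [← lt_div_iff₀ (by positivity), one_div_div]
  refine (summable_nat_add_iff 1).1 <| Summable.of_nonneg_of_le (fun n => norm_nonneg _)
    (fun n => ?_) ((summable_geometric_of_lt_one (by positivity) hq).mul_left |x|)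
  rw [norm_mul, norm_pow, Real.norm_of_nonneg (pathVol_nonneg _ ht), Real.norm_eq_abs, mul_pow,
    pow_succ]
  calc pathVol (n + 1) t * (|x| ^ n * |x|) ≤ (2 / π) ^ n * (|x| ^ n * |x|) := by
        gcongr
        exact (pathVol_succ_le n ht).trans (mul_le_of_le_one_right (by positivity) (cos_le_one _))
    _ = |x| * (|x| ^ n * (2 / π) ^ n) := by ring

-- For `t ∈ [0, 1]`: the slice `y₀ = t` of the polytope of the path on `n + 1` vertices, with `y₀`
-- dropped.
def pathSlice (n : ℕ) (t : ℝ) : Set (Fin n → ℝ) :=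
  {x | (∀ i, x i ∈ Set.Icc (0:ℝ) 1) ∧
    ∀ i : Fin n, (Fin.cons t x : Fin (n + 1) → ℝ) i.castSucc + x i ≤ 1}

theorem measurableSet_pathSlice (n : ℕ) (t : ℝ) : MeasurableSet (pathSlice n t) := by
  unfold pathSlice
  measurability

theorem cons_mem_pathSlice_succ {n : ℕ} {t a : ℝ} {y : Fin n → ℝ} :
    Fin.cons a y ∈ pathSlice (n + 1) t ↔
      (a ∈ Set.Icc (0:ℝ) 1 ∧ t + a ≤ 1) ∧ y ∈ pathSlice n a := by
  simp only [pathSlice, Set.mem_ofPred_eq, Fin.forall_fin_succ, Fin.cons_zero, Fin.cons_succ,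
    Fin.castSucc_zero]
  tauto

theorem setOf_cons_mem_pathSlice_succ {n : ℕ} {t : ℝ} (ht : 0 ≤ t) (a : ℝ) :
    {y : Fin n → ℝ | Fin.cons a y ∈ pathSlice (n + 1) t} =
      if a ∈ Set.Icc 0 (1 - t) then pathSlice n a else ∅ := by
  ext y
  rw [Set.mem_ofPred_eq, cons_mem_pathSlice_succ]
  split_ifs with ha
  · have : a ∈ Set.Icc (0:ℝ) 1 ∧ t + a ≤ 1 := ⟨⟨ha.1, by linarith [ha.2]⟩, by linarith [ha.2]⟩
    simp [this]
  · simp only [Set.mem_empty_iff_false, iff_false, not_and]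
    exact fun h _ => ha ⟨h.1.1, by linarith [h.2]⟩

theorem volume_pathSlice (n : ℕ) {t : ℝ} (ht : t ∈ Set.Icc (0:ℝ) 1) :
    volume (pathSlice n t) = ENNReal.ofReal (pathVol n t) := by
  induction n generalizing t with
  | zero =>
    have : pathSlice 0 t = Set.univ := Set.eq_univ_of_forall fun x => ⟨finZeroElim, finZeroElim⟩
    rw [this, volume_pi, Measure.pi_empty_univ, pathVol, ENNReal.ofReal_one]
  | succ n ih =>
    have hV : IntegrableOn (pathVol n) (Set.Icc 0 (1 - t)) :=
      (continuous_pathVol n).integrableOn_Icc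
    have hV_nonneg : 0 ≤ᵐ[volume.restrict (Set.Icc 0 (1 - t))] pathVol n :=
      (ae_restrict_iff' measurableSet_Icc).2 <| .of_forall fun s hs =>
        pathVol_nonneg n ⟨hs.1, by linarith [hs.2, ht.1]⟩
    calc volume (pathSlice (n + 1) t)
        = ∫⁻ a, (Set.Icc 0 (1 - t)).indicator (fun a => volume (pathSlice n a)) a := by
          rw [volume_eq_lintegral_volume_cons (measurableSet_pathSlice _ _)]
          congr 1 with a
          rw [setOf_cons_mem_pathSlice_succ ht.1]
          split_ifs with ha <;> simp [ha]
      _ = ∫⁻ a in Set.Icc 0 (1 - t), ENNReal.ofReal (pathVol n a) := by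
          rw [lintegral_indicator measurableSet_Icc]
          exact setLIntegral_congr_fun measurableSet_Icc fun a ha =>
            ih ⟨ha.1, by linarith [ha.2, ht.1]⟩
      _ = ENNReal.ofReal (pathVol (n + 1) t) := by
          rw [← ofReal_integral_eq_lintegral_ofReal hV hV_nonneg, integral_Icc_eq_integral_Ioc,
            ← integral_of_le (by linarith [ht.2])]
          rfl

theorem forall_adj_pathG_succ_iff {m : ℕ} (x : Fin (m + 1) → ℝ) :
    (∀ ⦃i j⦄, (pathG (m + 1)).Adj i j → x i + x j ≤ 1) ↔
      ∀ k : Fin m, x k.castSucc + x k.succ ≤ 1 := by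
  refine ⟨fun h k => h ?_, fun h i j hij => ?_⟩
  · simp [pathG, SimpleGraph.fromRel_adj, Fin.ext_iff]
  · rw [pathG, SimpleGraph.fromRel_adj] at hij
    obtain ⟨-, hij | hij⟩ := hij
    · obtain ⟨k, rfl, rfl⟩ : ∃ k : Fin m, k.castSucc = i ∧ k.succ = j :=
        ⟨⟨i, by omega⟩, Fin.ext rfl, Fin.ext (by simp [hij])⟩
      exact h k
    · obtain ⟨k, rfl, rfl⟩ : ∃ k : Fin m, k.castSucc = j ∧ k.succ = i :=
        ⟨⟨j, by omega⟩, Fin.ext rfl, Fin.ext (by simp [hij])⟩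
      rw [add_comm]
      exact h k

theorem gvol_pathG (n : ℕ) : gvol (pathG n) = pathVol n 0 := by
  have hslice : {x : Fin n → ℝ | (∀ i, x i ∈ Set.Icc (0:ℝ) 1) ∧
      ∀ ⦃i j⦄, (pathG n).Adj i j → x i + x j ≤ 1} = pathSlice n 0 := by
    ext x
    refine and_congr_right fun hx => ?_
    cases n with
    | zero => simp
    | succ m =>
      rw [forall_adj_pathG_succ_iff, Fin.forall_fin_succ]
      simp [(hx 0).2]
  rw [gvol, hslice, volume_pathSlice n ⟨le_rfl, zero_le_one⟩,
    ENNReal.toReal_ofReal (pathVol_nonneg n ⟨le_rfl, zero_le_one⟩)]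

noncomputable def pathVolGenFun (x t : ℝ) : ℝ := (cos (x * t) + sin (x * (1 - t))) / cos x

theorem continuous_pathVolGenFun (x : ℝ) : Continuous (pathVolGenFun x) := by
  unfold pathVolGenFun; fun_prop

theorem pathVolGenFun_eq_one_add {x : ℝ} (hx : cos x ≠ 0) (t : ℝ) :
    pathVolGenFun x t = 1 + x * tailIntegral (pathVolGenFun x) t := by
  have int_cos : ∫ s in (0:ℝ)..1 - t, x * cos (x * s) = sin (x * (1 - t)) := by
    rw [integral_eq_sub_of_hasDerivAt (f := fun s => sin (x * s)) (fun s _ => ?_)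
      ((by fun_prop : Continuous fun s => x * cos (x * s)).intervalIntegrable _ _)]
    · simp
    · simpa [mul_comm] using ((hasDerivAt_id s).const_mul x).sin
  have int_sin : ∫ s in (0:ℝ)..1 - t, x * sin (x * (1 - s)) = cos (x * t) - cos x := by
    rw [integral_eq_sub_of_hasDerivAt (f := fun s => cos (x * (1 - s))) (fun s _ => ?_)
      ((by fun_prop : Continuous fun s => x * sin (x * (1 - s))).intervalIntegrable _ _)]
    · simp
    · simpa [mul_comm] using (((hasDerivAt_id s).const_sub 1).const_mul x).cos
  have hint : x * tailIntegral (pathVolGenFun x) t =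
      (cos (x * t) + sin (x * (1 - t)) - cos x) / cos x := by
    simp only [tailIntegral, pathVolGenFun, intervalIntegral.integral_div]
    rw [← mul_div_assoc, ← intervalIntegral.integral_const_mul]
    simp only [mul_add]
    rw [intervalIntegral.integral_add ((by fun_prop : Continuous _).intervalIntegrable _ _)
      ((by fun_prop : Continuous _).intervalIntegrable _ _), int_cos, int_sin]
    ring
  rw [hint, pathVolGenFun]
  field_simp
  ring

noncomputable def pathVolRemainder (x : ℝ) (N : ℕ) (t : ℝ) : ℝ :=
  pathVolGenFun x t - ∑ n ∈ Finset.range N, pathVol n t * x ^ n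

theorem continuous_pathVolRemainder (x : ℝ) (N : ℕ) : Continuous (pathVolRemainder x N) :=
  (continuous_pathVolGenFun x).sub <| continuous_finsetSum _ fun n _ =>
    (continuous_pathVol n).mul continuous_const

theorem pathVolRemainder_succ {x : ℝ} (hx : cos x ≠ 0) (N : ℕ) (t : ℝ) :
    pathVolRemainder x (N + 1) t = x * tailIntegral (pathVolRemainder x N) t := by
  have hsum : tailIntegral (fun s => ∑ n ∈ Finset.range N, pathVol n s * x ^ n) t =
      ∑ n ∈ Finset.range N, pathVol (n + 1) t * x ^ n := by
    rw [tailIntegral, intervalIntegral.integral_finsetSum (f := fun n s => pathVol n s * x ^ n)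
      fun n _ => ((continuous_pathVol n).mul continuous_const).intervalIntegrable _ _]
    simp only [intervalIntegral.integral_mul_const]
    rfl
  have hT : tailIntegral (pathVolRemainder x N) t =
      tailIntegral (pathVolGenFun x) t - ∑ n ∈ Finset.range N, pathVol (n + 1) t * x ^ n := by
    rw [← hsum]
    exact tailIntegral_sub (continuous_pathVolGenFun x) (by fun_prop) t
  have hshift : ∑ n ∈ Finset.range (N + 1), pathVol n t * x ^ n =
      1 + x * ∑ n ∈ Finset.range N, pathVol (n + 1) t * x ^ n := by
    rw [Finset.sum_range_succ', Finset.mul_sum, add_comm]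
    simp only [pathVol, pow_zero, mul_one, pow_succ, mul_comm, mul_left_comm]
  rw [hT, pathVolRemainder, hshift, pathVolGenFun_eq_one_add hx t]
  ring

theorem abs_pathVolRemainder_le {x M : ℝ} (hx : cos x ≠ 0)
    (hM : ∀ t ∈ Set.Icc (0:ℝ) 1, |pathVolGenFun x t| ≤ M) (N : ℕ) {t : ℝ}
    (ht : t ∈ Set.Icc (0:ℝ) 1) : |pathVolRemainder x N t| ≤ M * |x| ^ N * pathVol N t := by
  induction N generalizing t with
  | zero => simpa [pathVolRemainder, pathVol] using hM t ht
  | succ N ih =>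
    calc |pathVolRemainder x (N + 1) t|
        = |x| * |tailIntegral (pathVolRemainder x N) t| := by
          rw [pathVolRemainder_succ hx, abs_mul]
      _ ≤ |x| * tailIntegral (fun s => M * |x| ^ N * pathVol N s) t := by
          gcongr
          exact (abs_tailIntegral_le _ ht.2).trans <| tailIntegral_mono
            (continuous_pathVolRemainder x N).abs (by fun_prop) (fun s hs => ih hs) ht
      _ = M * |x| ^ (N + 1) * pathVol (N + 1) t := by
          rw [tailIntegral_const_mul, pathVol]; ring

theorem hasSum_pathVol_mul_pow {x : ℝ} (hx : |x| < π / 2) {t : ℝ} (ht : t ∈ Set.Icc (0:ℝ) 1) :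
    HasSum (fun n => pathVol n t * x ^ n) (pathVolGenFun x t) := by
  have hcos : cos x ≠ 0 := (cos_pos_of_mem_Ioo (abs_lt.1 hx)).ne'
  have hsum := summable_norm_pathVol_mul_pow hx ht
  obtain ⟨M, hM⟩ := (isCompact_Icc (a := 0) (b := 1)).exists_bound_of_continuousOn
    (continuous_pathVolGenFun x).continuousOn
  have hR : Tendsto (fun N => pathVolRemainder x N t) atTop (𝓝 0) := by
    refine squeeze_zero_norm (a := fun N => M * ‖pathVol N t * x ^ N‖) (fun N => ?_)
      (by simpa using hsum.tendsto_atTop_zero.const_mul M)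
    rw [Real.norm_eq_abs, norm_mul, norm_pow, Real.norm_of_nonneg (pathVol_nonneg N ht),
      Real.norm_eq_abs]
    exact (abs_pathVolRemainder_le hcos hM N ht).trans_eq (by ring)
  rw [hasSum_iff_tendsto_nat_of_summable_norm hsum]
  simpa [pathVolRemainder] using (tendsto_const_nhds (x := pathVolGenFun x t)).sub hR

/-- For `|x| < π/2`, `Σ_{n ≥ 0} vol(L_n)·xⁿ = sec x + tan x`. -/
theorem vol_path_genFun (x : ℝ) (hx : |x| < π / 2) :
    HasSum (fun n : ℕ => gvol (pathG n) * x ^ n) (1 / Real.cos x + Real.tan x) := by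
  simpa [gvol_pathG, pathVolGenFun, add_div, tan_eq_sin_div_cos] using
    hasSum_pathVol_mul_pow hx ⟨le_rfl, zero_le_one⟩
end

section
/- Let m, n be positive integers and let 1/2 ≤ c ≤ 1. Then the sliced volume of the graph polytope of the complete bipartite graph K_{m,n} is vol(K_{m,n}, c) = c^n·(1−c)^m + m · Σ_{i=0}^{n} C(n,i)·(−1)^i·(c^{m+i} − (1−c)^{m+i})/(m+i). -/
/-!
Split the coordinates along the two sides, `x ∈ [0,c]^m` and `y ∈ [0,c]^n`. All constraints
`x_i + y_j ≤ 1` together say `max x + y_j ≤ 1`, so the fibre over `x` is the cube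
`[0, min(c, 1 - max x)]^n`. The maximum of `m` uniform coordinates on `[0,c]` has density
`m t^(m-1)`, hence `vol(K_{m,n}, c) = ∫₀ᶜ m t^(m-1) min(c, 1 - t)^n dt`. For `c ≥ 1/2` the minimum
is `c` on `[0, 1 - c]` and `1 - t` on `[1 - c, c]`; expanding `(1 - t)^n` binomially on the second
piece gives the sum.
-/

open MeasureTheory

/-- The sliced volume `vol(G, a)`: the Lebesgue volume of
`{x ∈ [0,a]^V : x_i + x_j ≤ 1 for every edge ij of G}`. -/
noncomputable def svol {V : Type*} [Fintype V] (G : SimpleGraph V) (a : ℝ) : ℝ :=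
  (volume {x : V → ℝ | (∀ i, x i ∈ Set.Icc (0:ℝ) a) ∧
      ∀ ⦃i j⦄, G.Adj i j → x i + x j ≤ 1}).toReal

open Set

lemma volume_univ_pi_Icc {ι : Type*} [Fintype ι] (a b : ℝ) :
    volume (univ.pi fun _ : ι => Icc a b) = ENNReal.ofReal (b - a) ^ Fintype.card ι := by
  rw [volume_pi_pi]
  simp [Real.volume_Icc]

lemma one_sub_pow_eq_sum {R : Type*} [CommRing R] (t : R) (n : ℕ) :
    (1 - t) ^ n = ∑ i ∈ Finset.range (n + 1), (n.choose i : R) * (-1) ^ i * t ^ i := by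
  rw [sub_eq_neg_add, add_pow]
  refine Finset.sum_congr rfl fun i _ => ?_
  rw [neg_pow]
  ring

lemma integral_succ_mul_pow (m : ℕ) (a b : ℝ) :
    ∫ t in a..b, (m + 1) * t ^ m = b ^ (m + 1) - a ^ (m + 1) := by
  rw [intervalIntegral.integral_const_mul, integral_pow]
  field_simp

lemma lintegral_Icc_ofReal_succ_mul_pow (m : ℕ) (u : ℝ) :
    ∫⁻ s in Icc 0 u, ENNReal.ofReal ((m + 1) * s ^ m) = ENNReal.ofReal u ^ (m + 1) := by
  rcases lt_or_ge u 0 with hu | hu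
  · simp [Icc_eq_empty_of_lt hu, ENNReal.ofReal_of_nonpos hu.le]
  rw [← ofReal_integral_eq_lintegral_ofReal, integral_Icc_eq_integral_Ioc,
    ← intervalIntegral.integral_of_le hu, integral_succ_mul_pow, ← ENNReal.ofReal_pow hu]
  · simp
  · exact (continuous_const.mul (continuous_pow m)).integrableOn_Icc
  · filter_upwards [ae_restrict_mem measurableSet_Icc] with s hs
    exact mul_nonneg (by positivity) (pow_nonneg hs.1 m)

lemma iSup_preimage_Iic_inter_univ_pi_Icc {ι : Type*} [Finite ι] [Nonempty ι] (c t : ℝ) :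
    (fun x : ι → ℝ => ⨆ i, x i) ⁻¹' Iic t ∩ univ.pi (fun _ => Icc 0 c) =
      univ.pi fun _ => Icc 0 (min c t) := by
  ext x
  simp only [mem_inter_iff, mem_preimage, mem_Iic, mem_univ_pi, mem_Icc, le_min_iff,
    ciSup_le_iff (finite_range x).bddAbove]
  grind

lemma map_iSup_volume_restrict_univ_pi_Icc (m : ℕ) (c : ℝ) :
    (volume.restrict (univ.pi fun _ : Fin (m + 1) => Icc 0 c)).map (fun x => ⨆ i, x i) =
      volume.withDensity ((Icc 0 c).indicator fun t => ENNReal.ofReal ((m + 1) * t ^ m)) := by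
  have hsup : Measurable fun x : Fin (m + 1) → ℝ => ⨆ i, x i :=
    .iSup fun i => measurable_pi_apply i
  have : IsFiniteMeasure
      ((volume.restrict (univ.pi fun _ : Fin (m + 1) => Icc 0 c)).map (fun x => ⨆ i, x i)) := by
    refine ⟨?_⟩
    rw [Measure.map_apply hsup .univ, preimage_univ, Measure.restrict_apply_univ,
      volume_univ_pi_Icc]
    finiteness
  refine Measure.ext_of_Iic _ _ fun t => ?_
  rw [Measure.map_apply hsup measurableSet_Iic, Measure.restrict_apply (hsup measurableSet_Iic),
    iSup_preimage_Iic_inter_univ_pi_Icc, volume_univ_pi_Icc, withDensity_apply _ measurableSet_Iic,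
    lintegral_indicator measurableSet_Icc, Measure.restrict_restrict measurableSet_Icc,
    show Icc 0 c ∩ Iic t = Icc 0 (min c t) by ext; simp [and_assoc],
    lintegral_Icc_ofReal_succ_mul_pow]
  simp

section CompleteBipartite

variable (α β : Type*)

def completeBipartiteSlice (c : ℝ) : Set ((α → ℝ) × (β → ℝ)) :=
  (univ.pi fun _ => Icc 0 c) ×ˢ (univ.pi fun _ => Icc 0 c) ∩ {p | ∀ i j, p.1 i + p.2 j ≤ 1}

lemma svol_completeBipartiteGraph [Fintype α] [Fintype β] (c : ℝ) :
    svol (completeBipartiteGraph α β) c = (volume (completeBipartiteSlice α β c)).toReal := by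
  rw [svol,
    ← (volume_measurePreserving_sumPiEquivProdPi fun _ : α ⊕ β => ℝ).measure_preimage_equiv]
  congr 2
  ext x
  simp [completeBipartiteSlice, Sum.forall, MeasurableEquiv.coe_sumPiEquivProdPi, add_comm,
    Pi.le_def]
  grind

lemma isClosed_completeBipartiteSlice (c : ℝ) : IsClosed (completeBipartiteSlice α β c) := by
  refine ((isClosed_set_pi fun _ _ => isClosed_Icc).prod
    (isClosed_set_pi fun _ _ => isClosed_Icc)).inter ?_
  simp only [ofPred_forall]
  exact isClosed_iInter fun i => isClosed_iInter fun j =>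
    isClosed_le (by fun_prop) continuous_const

lemma volume_prodMk_preimage_completeBipartiteSlice [Fintype α] [Nonempty α] [Fintype β]
    (c : ℝ) (x : α → ℝ) :
    volume (Prod.mk x ⁻¹' completeBipartiteSlice α β c) =
      (univ.pi fun _ => Icc 0 c).indicator
        (fun x => ENNReal.ofReal (min c (1 - ⨆ i, x i)) ^ Fintype.card β) x := by
  by_cases hx : x ∈ univ.pi fun _ => Icc 0 c
  · have le_one_sub_iSup (t : ℝ) : t ≤ 1 - ⨆ i, x i ↔ ∀ i, x i + t ≤ 1 := by
      rw [le_sub_comm, ciSup_le_iff (finite_range x).bddAbove]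
      simp only [le_sub_iff_add_le]
    rw [indicator_of_mem hx, ← sub_zero (min c _), ← volume_univ_pi_Icc]
    congr 1
    ext y
    simp only [completeBipartiteSlice, mem_preimage, mem_inter_iff, mem_prod, hx, true_and,
      mem_ofPred_eq, mem_univ_pi, mem_Icc, le_min_iff, le_one_sub_iSup]
    grind
  · rw [indicator_of_notMem hx, ← measure_empty (μ := (volume : Measure (β → ℝ)))]
    congr 1
    ext y
    simp only [completeBipartiteSlice, mem_preimage, mem_inter_iff, mem_prod, hx, false_and,
      mem_empty_iff_false]

lemma volume_completeBipartiteSlice [Fintype β] (m : ℕ) (c : ℝ) :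
    volume (completeBipartiteSlice (Fin (m + 1)) β c) =
      ∫⁻ t in Icc 0 c,
        ENNReal.ofReal ((m + 1) * t ^ m) * ENNReal.ofReal (min c (1 - t)) ^ Fintype.card β := by
  have hsup : Measurable fun x : Fin (m + 1) → ℝ => ⨆ i, x i :=
    .iSup fun i => measurable_pi_apply i
  rw [Measure.volume_eq_prod,
    Measure.prod_apply (isClosed_completeBipartiteSlice _ _ c).measurableSet]
  simp_rw [volume_prodMk_preimage_completeBipartiteSlice]
  rw [lintegral_indicator (.univ_pi fun _ => measurableSet_Icc),
    ← lintegral_map (f := fun t => ENNReal.ofReal (min c (1 - t)) ^ Fintype.card β)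
      (by fun_prop) hsup, map_iSup_volume_restrict_univ_pi_Icc,
    withDensity_indicator measurableSet_Icc,
    lintegral_withDensity_eq_lintegral_mul _ (by fun_prop) (by fun_prop)]
  rfl

end CompleteBipartite

lemma integral_Icc_succ_mul_pow_mul_min_pow (m n : ℕ) {c : ℝ} (hc0 : 1 / 2 ≤ c)
    (hc1 : c ≤ 1) :
    ∫ t in Icc 0 c, (m + 1) * t ^ m * min c (1 - t) ^ n =
      c ^ n * (1 - c) ^ (m + 1) + ((m + 1 : ℕ) : ℝ) * ∑ i ∈ Finset.range (n + 1),
        (n.choose i : ℝ) * (-1) ^ i *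
          ((c ^ (m + 1 + i) - (1 - c) ^ (m + 1 + i)) / (((m + 1 : ℕ) : ℝ) + i)) := by
  have hf : Continuous fun t : ℝ => (m + 1) * t ^ m * min c (1 - t) ^ n := by fun_prop
  rw [integral_Icc_eq_integral_Ioc, ← intervalIntegral.integral_of_le (by linarith),
    ← intervalIntegral.integral_add_adjacent_intervals (b := 1 - c)
      (hf.intervalIntegrable _ _) (hf.intervalIntegrable _ _)]
  congr 1
  · have min_eq (t) (ht : t ∈ uIcc 0 (1 - c)) :
        (m + 1) * t ^ m * min c (1 - t) ^ n = c ^ n * ((m + 1) * t ^ m) := by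
      rw [uIcc_of_le (by linarith), mem_Icc] at ht
      rw [min_eq_left (by linarith), mul_comm]
    rw [intervalIntegral.integral_congr min_eq, intervalIntegral.integral_const_mul,
      integral_succ_mul_pow]
    ring
  · have min_eq (t) (ht : t ∈ uIcc (1 - c) c) :
        (m + 1) * t ^ m * min c (1 - t) ^ n = ∑ i ∈ Finset.range (n + 1),
          (n.choose i : ℝ) * (-1) ^ i * ((m + 1) * t ^ (m + i)) := by
      rw [uIcc_of_le (by linarith), mem_Icc] at ht
      rw [min_eq_right (by linarith), one_sub_pow_eq_sum, Finset.mul_sum]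
      refine Finset.sum_congr rfl fun i _ => ?_
      ring
    rw [intervalIntegral.integral_congr min_eq,
      intervalIntegral.integral_finsetSum fun i _ =>
        (by fun_prop : Continuous _).intervalIntegrable _ _,
      Finset.mul_sum]
    refine Finset.sum_congr rfl fun i _ => ?_
    rw [intervalIntegral.integral_const_mul, intervalIntegral.integral_const_mul, integral_pow]
    push_cast
    field_simp
    ring

lemma svol_completeBipartiteGraph_fin_succ {β : Type*} [Fintype β] (m : ℕ) {c : ℝ}
    (hc : c ≤ 1) :
    svol (completeBipartiteGraph (Fin (m + 1)) β) c =
      ∫ t in Icc 0 c, (m + 1) * t ^ m * min c (1 - t) ^ Fintype.card β := by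
  have nonneg (t) (ht : t ∈ Icc 0 c) : 0 ≤ min c (1 - t) :=
    le_min (ht.1.trans ht.2) (by linarith [ht.2])
  rw [svol_completeBipartiteGraph, volume_completeBipartiteSlice,
    integral_eq_lintegral_of_nonneg_ae _ (by fun_prop)]
  · congr 1
    refine setLIntegral_congr_fun measurableSet_Icc fun t ht => ?_
    rw [← ENNReal.ofReal_pow (nonneg t ht), ← ENNReal.ofReal_mul (by have := ht.1; positivity)]
  · filter_upwards [ae_restrict_mem measurableSet_Icc] with t ht
    have := ht.1
    have := nonneg t ht
    positivity

theorem svol_completeBipartite_general (m n : ℕ) (hm : 1 ≤ m)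
    (c : ℝ) (hc0 : 1 / 2 ≤ c) (hc1 : c ≤ 1) :
    svol (completeBipartiteGraph (Fin m) (Fin n)) c =
      c ^ n * (1 - c) ^ m +
        (m : ℝ) * ∑ i ∈ Finset.range (n + 1),
          (n.choose i : ℝ) * (-1 : ℝ) ^ i *
            ((c ^ (m + i) - (1 - c) ^ (m + i)) / ((m : ℝ) + (i : ℝ))) := by
  obtain ⟨m, rfl⟩ := Nat.exists_eq_add_of_le' hm
  rw [svol_completeBipartiteGraph_fin_succ m hc1, Fintype.card_fin,
    integral_Icc_succ_mul_pow_mul_min_pow m n hc0 hc1]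

/-- For `1/2 ≤ c ≤ 1`, the sliced volume of the complete bipartite graph:
`vol(K_{m,n}, c) = cⁿ(1-c)^m + m·Σ_{i=0}^n C(n,i)(-1)^i (c^{m+i} - (1-c)^{m+i})/(m+i)`. -/
theorem svol_completeBipartite (m n : ℕ) (hm : 1 ≤ m) (hn : 1 ≤ n)
    (c : ℝ) (hc0 : 1 / 2 ≤ c) (hc1 : c ≤ 1) :
    svol (completeBipartiteGraph (Fin m) (Fin n)) c =
      c ^ n * (1 - c) ^ m +
        (m : ℝ) * ∑ i ∈ Finset.range (n + 1),
          (n.choose i : ℝ) * (-1 : ℝ) ^ i *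
            ((c ^ (m + i) - (1 - c) ^ (m + i)) / ((m : ℝ) + (i : ℝ))) :=
  svol_completeBipartite_general m n hm c hc0 hc1
end

section
/- For all positive integers m and n, vol(K_{m,n}) = Σ_{i=0}^{n} C(n,i)·(−1)^i·m/(m+i). -/
/-!
A point `(x, y) ∈ [0,1]^m × [0,1]^n` lies in the polytope of `K_{m,n}` iff
`x ≤ 1 - max y` coordinatewise, so the slice over `y` is the cube `[0, 1 - max y]^m` and
`vol(K_{m,n}) = ∫ (1 - max y)^m dy`. By the layer-cake formula, with `max y ≤ s` on a set of
volume `s^n`, this is the beta integral `∫₀¹ m t^(m-1) (1-t)^n dt`, and expanding `(1-t)^n`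
binomially gives the sum.
-/

open MeasureTheory

open Set

lemma lintegral_ofReal_pow_eq_lintegral_meas_le_mul {α : Type*} [MeasurableSpace α]
    (μ : Measure α) {f : α → ℝ} (f_nn : 0 ≤ᵐ[μ] f) (f_mble : AEMeasurable f μ) {k : ℕ}
    (hk : k ≠ 0) :
    ∫⁻ ω, ENNReal.ofReal (f ω ^ k) ∂μ =
      ∫⁻ t in Ioi 0, μ {a | t ≤ f a} * ENNReal.ofReal (k * t ^ (k - 1)) := by
  have primitive (x : ℝ) : ∫ t in 0..x, (k : ℝ) * t ^ (k - 1) = x ^ k := by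
    rw [intervalIntegral.integral_const_mul, integral_pow, Nat.sub_add_cancel (by omega),
      zero_pow hk, sub_zero, Nat.cast_pred (by omega), sub_add_cancel,
      mul_div_cancel₀ _ (by exact_mod_cast hk)]
  have hcont : Continuous fun t : ℝ => (k : ℝ) * t ^ (k - 1) := by fun_prop
  simp_rw [← primitive]
  exact lintegral_comp_eq_lintegral_meas_le_mul μ f_nn f_mble
    (fun _ _ => hcont.intervalIntegrable _ _)
    ((ae_restrict_mem measurableSet_Ioi).mono fun t ht => by have := ht.out.le; positivity)

-- `⨆ j, y j` stands for `max y`; over an empty `κ` it is `0`, which is the value needed here.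
lemma volume_Icc_inter_setOf_iSup_le {κ : Type*} [Fintype κ] {s : ℝ} (hs : s ≤ 1) :
    volume (Icc 0 1 ∩ {y : κ → ℝ | ⨆ j, y j ≤ s}) =
      (Ici 0).indicator (fun s => ENNReal.ofReal s ^ Fintype.card κ) s := by
  rcases lt_or_ge s 0 with hs0 | hs0
  · have : Icc 0 1 ∩ {y : κ → ℝ | ⨆ j, y j ≤ s} = ∅ :=
      eq_empty_of_forall_notMem fun y hy => hs0.not_ge (Real.iSup_nonneg hy.1.1 |>.trans hy.2)
    rw [this, measure_empty, indicator_of_notMem (notMem_Ici.2 hs0)]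
  · have : Icc 0 1 ∩ {y : κ → ℝ | ⨆ j, y j ≤ s} = Icc 0 (fun _ => s) := by
      ext y
      simp only [mem_inter_iff, mem_Icc, mem_ofPred_eq]
      constructor
      · rintro ⟨⟨hy0, -⟩, hy⟩
        exact ⟨hy0, fun j => (le_ciSup (finite_range y).bddAbove j).trans hy⟩
      · rintro ⟨hy0, hy⟩
        exact ⟨⟨hy0, fun j => (hy j).trans hs⟩, Real.iSup_le hy hs0⟩
    rw [this, Real.volume_Icc_pi, indicator_of_mem (mem_Ici.2 hs0)]
    simp

lemma mul_pow_pred_mul_one_sub_pow_nonneg (k n : ℕ) {t : ℝ} (ht : t ∈ Icc (0 : ℝ) 1) :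
    0 ≤ k * t ^ (k - 1) * (1 - t) ^ n :=
  mul_nonneg (mul_nonneg k.cast_nonneg (pow_nonneg ht.1 _)) (pow_nonneg (sub_nonneg.2 ht.2) _)

lemma integral_mul_pow_pred_mul_one_sub_pow {m : ℕ} (hm : m ≠ 0) (n : ℕ) :
    ∫ t in (0 : ℝ)..1, m * t ^ (m - 1) * (1 - t) ^ n =
      ∑ i ∈ Finset.range (n + 1), (n.choose i : ℝ) * (-1) ^ i * (m / (m + i)) := by
  have expand (t : ℝ) : m * t ^ (m - 1) * (1 - t) ^ n =
      ∑ i ∈ Finset.range (n + 1), (n.choose i : ℝ) * (-1) ^ i * (m * t ^ (m - 1 + i)) := by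
    rw [← neg_add_eq_sub, add_pow, Finset.mul_sum]
    refine Finset.sum_congr rfl fun i _ => ?_
    rw [neg_pow, pow_add]
    ring
  simp_rw [expand]
  rw [intervalIntegral.integral_finsetSum fun i _ => (by fun_prop : Continuous fun t : ℝ =>
    (n.choose i : ℝ) * (-1) ^ i * (m * t ^ (m - 1 + i))).intervalIntegrable _ _]
  refine Finset.sum_congr rfl fun i _ => ?_
  have : ((m - 1 + i : ℕ) : ℝ) + 1 = m + i := by
    rw [Nat.cast_add, Nat.cast_pred (Nat.pos_of_ne_zero hm)]; ring
  rw [intervalIntegral.integral_const_mul, intervalIntegral.integral_const_mul, integral_pow, this]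
  simp [div_eq_mul_inv]

variable {ι κ : Type*}

variable (ι κ) in
def bipartitePolytope : Set ((ι → ℝ) × (κ → ℝ)) :=
  {p | (∀ i, p.1 i ∈ Icc 0 1) ∧ (∀ j, p.2 j ∈ Icc 0 1) ∧ ∀ i j, p.1 i + p.2 j ≤ 1}

lemma gvol_completeBipartiteGraph_eq_volume [Fintype ι] [Fintype κ] :
    gvol (completeBipartiteGraph ι κ) = (volume (bipartitePolytope ι κ)).toReal := by
  rw [gvol, ← (volume_measurePreserving_sumPiEquivProdPi fun _ : ι ⊕ κ => ℝ).measure_preimage_equiv]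
  congr 2
  ext x
  simp [bipartitePolytope, MeasurableEquiv.coe_sumPiEquivProdPi, Equiv.sumPiEquivProdPi, add_comm,
    forall_comm (α := κ), and_assoc]

lemma measurableSet_bipartitePolytope [Countable ι] [Countable κ] :
    MeasurableSet (bipartitePolytope ι κ) := by
  simp only [bipartitePolytope, ofPred_and, ofPred_forall]
  measurability

lemma preimage_prodMk_bipartitePolytope [Finite κ] {y : κ → ℝ} (hy : y ∈ Icc 0 1) :
    (·, y) ⁻¹' bipartitePolytope ι κ = Icc 0 (fun _ => 1 - ⨆ j, y j) := by
  ext x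
  simp only [bipartitePolytope, mem_preimage, mem_ofPred_eq, mem_Icc]
  have hsup_nonneg : 0 ≤ ⨆ j, y j := Real.iSup_nonneg hy.1
  constructor
  · rintro ⟨hx, -, hxy⟩
    refine ⟨fun i => (hx i).1, fun i => ?_⟩
    have : ⨆ j, y j ≤ 1 - x i := Real.iSup_le (fun j => by linarith [hxy i j]) (by linarith [hx i])
    exact le_sub_comm.1 this
  · rintro ⟨hx0, hx1⟩
    refine ⟨fun i => ⟨hx0 i, (hx1 i).trans (by linarith)⟩, fun j => ⟨hy.1 j, hy.2 j⟩,
      fun i j => ?_⟩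
    linarith [hx1 i, le_ciSup (finite_range y).bddAbove j]

lemma preimage_prodMk_bipartitePolytope_of_notMem {y : κ → ℝ} (hy : y ∉ Icc 0 1) :
    (·, y) ⁻¹' bipartitePolytope ι κ = ∅ :=
  eq_empty_of_forall_notMem fun _ hx => hy ⟨fun j => (hx.2.1 j).1, fun j => (hx.2.1 j).2⟩

lemma volume_bipartitePolytope_eq_lintegral [Fintype ι] [Fintype κ] :
    volume (bipartitePolytope ι κ) =
      ∫⁻ y in Icc (0 : κ → ℝ) 1, ENNReal.ofReal ((1 - ⨆ j, y j) ^ Fintype.card ι) := by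
  rw [Measure.volume_eq_prod, Measure.prod_apply_symm measurableSet_bipartitePolytope,
    ← lintegral_indicator measurableSet_Icc]
  congr with y
  by_cases hy : y ∈ Icc 0 1
  · have : ⨆ j, y j ≤ 1 := Real.iSup_le hy.2 zero_le_one
    rw [preimage_prodMk_bipartitePolytope hy, Real.volume_Icc_pi, indicator_of_mem hy]
    simp [ENNReal.ofReal_pow (sub_nonneg.2 this)]
  · rw [preimage_prodMk_bipartitePolytope_of_notMem hy, measure_empty, indicator_of_notMem hy]

lemma volume_bipartitePolytope [Fintype ι] [Fintype κ] [Nonempty ι] :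
    volume (bipartitePolytope ι κ) = ENNReal.ofReal (∫ t in (0 : ℝ)..1,
      Fintype.card ι * t ^ (Fintype.card ι - 1) * (1 - t) ^ Fintype.card κ) := by
  set k := Fintype.card ι
  set n := Fintype.card κ
  have hf_nn : 0 ≤ᵐ[volume.restrict (Icc (0 : κ → ℝ) 1)] fun y => 1 - ⨆ j, y j :=
    (ae_restrict_mem measurableSet_Icc).mono fun y hy =>
      sub_nonneg.2 (Real.iSup_le hy.2 zero_le_one)
  have hf_mble : AEMeasurable (fun y : κ → ℝ => 1 - ⨆ j, y j) (volume.restrict (Icc 0 1)) :=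
    (measurable_const.sub (Measurable.iSup measurable_pi_apply)).aemeasurable
  have hlayer : ∀ t ∈ Ioi (0 : ℝ),
      volume.restrict (Icc (0 : κ → ℝ) 1) {y | t ≤ 1 - ⨆ j, y j} * ENNReal.ofReal (k * t ^ (k - 1))
        = (Iic 1).indicator (fun t => ENNReal.ofReal (k * t ^ (k - 1) * (1 - t) ^ n)) t := by
    intro t ht
    simp only [Measure.restrict_apply' measurableSet_Icc, inter_comm _ (Icc _ _),
      le_sub_comm (a := t)]
    rw [volume_Icc_inter_setOf_iSup_le (by linarith [ht.out])]
    by_cases ht1 : t ≤ 1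
    · rw [indicator_of_mem (mem_Ici.2 (sub_nonneg.2 ht1)), indicator_of_mem (mem_Iic.2 ht1),
        ← ENNReal.ofReal_pow (sub_nonneg.2 ht1), ← ENNReal.ofReal_mul (by positivity), mul_comm]
    · rw [indicator_of_notMem (by simpa using ht1), indicator_of_notMem (by simpa using ht1),
        zero_mul]
  have hint_nn : 0 ≤ᵐ[volume.restrict (Ioc (0 : ℝ) 1)] fun t => k * t ^ (k - 1) * (1 - t) ^ n :=
    (ae_restrict_mem measurableSet_Ioc).mono fun t ht =>
      mul_pow_pred_mul_one_sub_pow_nonneg k n (Ioc_subset_Icc_self ht)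
  rw [volume_bipartitePolytope_eq_lintegral,
    lintegral_ofReal_pow_eq_lintegral_meas_le_mul _ hf_nn hf_mble Fintype.card_ne_zero,
    setLIntegral_congr_fun measurableSet_Ioi hlayer, setLIntegral_indicator measurableSet_Iic,
    inter_comm, Ioi_inter_Iic, intervalIntegral.integral_of_le zero_le_one,
    ofReal_integral_eq_lintegral_ofReal (Continuous.integrableOn_Ioc (by fun_prop)) hint_nn]

lemma gvol_completeBipartiteGraph [Fintype ι] [Fintype κ] [Nonempty ι] :
    gvol (completeBipartiteGraph ι κ) = ∫ t in (0 : ℝ)..1,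
      Fintype.card ι * t ^ (Fintype.card ι - 1) * (1 - t) ^ Fintype.card κ := by
  rw [gvol_completeBipartiteGraph_eq_volume, volume_bipartitePolytope, ENNReal.toReal_ofReal
    (intervalIntegral.integral_nonneg zero_le_one fun _ => mul_pow_pred_mul_one_sub_pow_nonneg _ _)]

theorem vol_completeBipartite_sum_general (m n : ℕ) (hm : 1 ≤ m) :
    gvol (completeBipartiteGraph (Fin m) (Fin n)) =
      ∑ i ∈ Finset.range (n + 1),
        (n.choose i : ℝ) * (-1 : ℝ) ^ i * ((m : ℝ) / ((m : ℝ) + (i : ℝ))) := by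
  have : Nonempty (Fin m) := ⟨⟨0, hm⟩⟩
  rw [gvol_completeBipartiteGraph, Fintype.card_fin, Fintype.card_fin,
    integral_mul_pow_pred_mul_one_sub_pow (by omega)]

/-- `vol(K_{m,n}) = Σ_{i=0}^n C(n,i)·(-1)^i·m/(m+i)`. -/
theorem vol_completeBipartite_sum (m n : ℕ) (hm : 1 ≤ m) (hn : 1 ≤ n) :
    gvol (completeBipartiteGraph (Fin m) (Fin n)) =
      ∑ i ∈ Finset.range (n + 1),
        (n.choose i : ℝ) * (-1 : ℝ) ^ i * ((m : ℝ) / ((m : ℝ) + (i : ℝ))) :=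
  vol_completeBipartite_sum_general m n hm
end

section
/- For all positive integers m and n, the identity Σ_{i=0}^{n} C(n,i)·(−1)^i·m/(m+i) = 1/C(m+n, n) = Σ_{i=0}^{m} C(m,i)·(−1)^i·n/(n+i) holds. -/
/-! The partial-fraction sum `f n x = ∑ i ≤ n, C(n,i) (-1)^i / (x+i)` satisfies the Pascal
recursion `f (n+1) x = f n x - f n (x+1)`, which by induction gives
`f n x = n! / (x (x+1) ⋯ (x+n))`. At `x = m` the rising factorial equals `m · n! · C(m+n,n)`,
so `m · f n m = 1 / C(m+n,n)`; the second identity is the first with `m` and `n` swapped. -/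

open Finset Polynomial Nat

section

variable {K : Type*} [Field K]

theorem sum_choose_succ_mul_neg_one_pow_div_add (n : ℕ) (x : K) :
    ∑ i ∈ range (n + 2), ((n + 1).choose i : K) * ((-1) ^ i / (x + i)) =
      ∑ i ∈ range (n + 1), (n.choose i : K) * ((-1) ^ i / (x + i)) -
        ∑ i ∈ range (n + 1), (n.choose i : K) * ((-1) ^ i / (x + 1 + i)) := by
  rw [sum_choose_succ_mul (fun i _ => (-1 : K) ^ i / (x + i)), sub_eq_add_neg, ← sum_neg_distrib]
  congr 1
  refine sum_congr rfl fun i _ => ?_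
  push_cast
  ring_nf

theorem sum_choose_mul_neg_one_pow_div_add (n : ℕ) (x : K)
    (hx : (ascPochhammer K (n + 1)).eval x ≠ 0) :
    ∑ i ∈ range (n + 1), (n.choose i : K) * ((-1) ^ i / (x + i)) =
      n ! / (ascPochhammer K (n + 1)).eval x := by
  induction n generalizing x with
  | zero => simp [ascPochhammer_one] at hx ⊢
  | succ n ih =>
    have h_right : (ascPochhammer K (n + 2)).eval x =
        (ascPochhammer K (n + 1)).eval x * (x + (n + 1)) := by
      rw [ascPochhammer_succ_eval]; push_cast; ring
    have h_left :
        (ascPochhammer K (n + 2)).eval x = x * (ascPochhammer K (n + 1)).eval (x + 1) := by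
      rw [ascPochhammer_succ_left, eval_mul, eval_X, eval_comp, eval_add, eval_X, eval_one]
    have hx₀ : (ascPochhammer K (n + 1)).eval x ≠ 0 :=
      left_ne_zero_of_mul (h_right ▸ hx)
    have hx₁ : (ascPochhammer K (n + 1)).eval (x + 1) ≠ 0 :=
      right_ne_zero_of_mul (h_left ▸ hx)
    rw [sum_choose_succ_mul_neg_one_pow_div_add, ih x hx₀, ih (x + 1) hx₁,
      div_sub_div _ _ hx₀ hx₁, div_eq_div_iff (mul_ne_zero hx₀ hx₁) hx, factorial_succ]
    push_cast
    linear_combination (n ! : K) * ((ascPochhammer K (n + 1)).eval (x + 1) * h_right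
      - (ascPochhammer K (n + 1)).eval x * h_left)

end

theorem ascPochhammer_succ_eval_natCast {S : Type*} [CommSemiring S] (m n : ℕ) :
    (ascPochhammer S (n + 1)).eval (m : S) = m * n ! * (m + n).choose n := by
  rw [ascPochhammer_succ_left, eval_mul, eval_X, eval_comp, eval_add, eval_X, eval_one,
    ← Nat.cast_succ, ascPochhammer_nat_eq_natCast_ascFactorial,
    Nat.ascFactorial_eq_factorial_mul_choose]
  push_cast
  ring

theorem sum_choose_mul_neg_one_pow_mul_div_add_eq_inv_choose {K : Type*} [Field K] [CharZero K]
    (m n : ℕ) (hm : 1 ≤ m) :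
    ∑ i ∈ range (n + 1), (n.choose i : K) * (-1 : K) ^ i * ((m : K) / ((m : K) + (i : K))) =
      1 / ((m + n).choose n : K) := by
  have hm₀ : (m : K) ≠ 0 := Nat.cast_ne_zero.mpr (by omega)
  have hfact : (n ! : K) ≠ 0 := Nat.cast_ne_zero.mpr n.factorial_ne_zero
  have hchoose : ((m + n).choose n : K) ≠ 0 := Nat.cast_ne_zero.mpr (choose_pos (by omega)).ne'
  have hP : (ascPochhammer K (n + 1)).eval (m : K) ≠ 0 := by
    rw [ascPochhammer_succ_eval_natCast]; exact mul_ne_zero (mul_ne_zero hm₀ hfact) hchoose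
  calc _ = m * ∑ i ∈ range (n + 1), (n.choose i : K) * ((-1) ^ i / (m + i)) := by
          rw [mul_sum]; exact sum_congr rfl fun i _ => by ring
    _ = m * (n ! / (m * n ! * (m + n).choose n)) := by
          rw [sum_choose_mul_neg_one_pow_div_add n _ hP, ascPochhammer_succ_eval_natCast]
    _ = 1 / ((m + n).choose n : K) := by
          field_simp

/-- For positive integers `m` and `n`,
`Σ_{i=0}^n C(n,i)(-1)^i m/(m+i) = 1/C(m+n,n) = Σ_{i=0}^m C(m,i)(-1)^i n/(n+i)`. -/
theorem alternating_binomial_identity (m n : ℕ) (hm : 1 ≤ m) (hn : 1 ≤ n) :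
    (∑ i ∈ Finset.range (n + 1),
        (n.choose i : ℝ) * (-1 : ℝ) ^ i * ((m : ℝ) / ((m : ℝ) + (i : ℝ)))
      = 1 / ((m + n).choose n : ℝ)) ∧
    (∑ i ∈ Finset.range (m + 1),
        (m.choose i : ℝ) * (-1 : ℝ) ^ i * ((n : ℝ) / ((n : ℝ) + (i : ℝ)))
      = 1 / ((m + n).choose n : ℝ)) := by
  refine ⟨sum_choose_mul_neg_one_pow_mul_div_add_eq_inv_choose m n hm, ?_⟩
  rw [sum_choose_mul_neg_one_pow_mul_div_add_eq_inv_choose n m hn, add_comm, choose_symm_add]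
end

section
/- Let G be a finite simple graph with k = |V(G)| vertices, let n be a positive integer, and let 1/2 ≤ r ≤ 1 be a point where the sliced volume functions are differentiable. Then (d/dr) vol(nG, r) = n·(1−r)^{k(n−1)} · (d/dr) vol(G, r), where nG = G + G + ⋯ + G is the join of n copies of G. -/
open MeasureTheory

/-- `nG`, the join of `n` copies of `G`: vertices in different copies are always
adjacent, and vertices within a copy are adjacent according to `G`. -/
def joinPow {V : Type*} (G : SimpleGraph V) (n : ℕ) : SimpleGraph (Fin n × V) where
  Adj x y := x.1 ≠ y.1 ∨ (x.1 = y.1 ∧ G.Adj x.2 y.2)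
  symm := by
    constructor
    rintro x y (h | ⟨h, h'⟩)
    · exact Or.inl h.symm
    · exact Or.inr ⟨h.symm, h'.symm⟩
  loopless := by
    constructor
    rintro x (h | ⟨-, h⟩)
    · exact h rfl
    · exact G.irrefl h

/-! Write `P_r(H)` for the sliced polytope of `H` and let `1/2 ≤ s ≤ r ≤ 1`. A point of
`P_r(nG) \ P_s(nG)` has a coordinate `> s` in some copy `a`; every vertex outside that copy is
adjacent to it, so its coordinate is `< 1 - s`, while copy `a` lies in `P_r(G) \ P_s(G)`.
Conversely, every point whose copy `a` lies in `P_r(G) \ P_s(G)` and whose other coordinates lie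
in `[0, 1 - r]` belongs to `P_r(nG) \ P_s(nG)`, and these sets are disjoint for distinct `a`
because `1 - r ≤ s`. Hence, with `Δ = vol(G,r) - vol(G,s)`,
`n (1-r)^{k(n-1)} Δ ≤ vol(nG,r) - vol(nG,s) ≤ n (1-s)^{k(n-1)} Δ`, and dividing by `r - s` and
letting `s → r` (from either side) gives the formula. -/

open Set Filter Topology Asymptotics Function

theorem deriv_eq_mul_deriv_of_mem_uIcc {f g c : ℝ → ℝ} {S : Set ℝ} {r : ℝ}
    (hS : UniqueDiffWithinAt ℝ S r) (hf : DifferentiableAt ℝ f r)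
    (hg : DifferentiableAt ℝ g r) (hc : ContinuousWithinAt c S r)
    (h : ∀ t ∈ S, f t - f r ∈ uIcc (c r * (g t - g r)) (c t * (g t - g r))) :
    deriv f r = c r * deriv g r := by
  have hc₀ : (fun t => c t - c r) =o[𝓝[S] r] fun _ => (1 : ℝ) :=
    (isLittleO_one_iff ℝ).2 (by simpa using hc.sub_const (c r))
  have hbound : (fun t => f t - f r - c r * (g t - g r)) =O[𝓝[S] r]
      fun t => (c t - c r) * (g t - g r) :=
    IsBigO.of_bound 1 <| eventually_nhdsWithin_of_forall fun t ht => by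
      simpa [sub_mul] using abs_sub_left_of_mem_uIcc (h t ht)
  have hzero : HasDerivWithinAt (fun t => f t - c r * g t) 0 S r := by
    rw [hasDerivWithinAt_iff_isLittleO]
    have := hbound.trans_isLittleO (hc₀.mul_isBigO (hg.isBigO_sub.mono nhdsWithin_le_nhds))
    simpa [mul_sub, sub_sub_sub_comm] using this
  have hderiv := (hf.hasDerivAt.sub (hg.hasDerivAt.const_mul (c r))).hasDerivWithinAt (s := S)
  linarith [hS.eq_deriv _ hderiv hzero]

def slicedPolytope {V : Type*} (G : SimpleGraph V) (a : ℝ) : Set (V → ℝ) :=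
  {x | (∀ i, x i ∈ Icc (0 : ℝ) a) ∧ ∀ ⦃i j⦄, G.Adj i j → x i + x j ≤ 1}

section SlicedPolytope

variable {V : Type*} (G : SimpleGraph V) {a b : ℝ}

theorem slicedPolytope_mono (hab : a ≤ b) : slicedPolytope G a ⊆ slicedPolytope G b :=
  fun _ hx => ⟨fun i => ⟨(hx.1 i).1, (hx.1 i).2.trans hab⟩, hx.2⟩

theorem isClosed_slicedPolytope (a : ℝ) : IsClosed (slicedPolytope G a) := by
  simp only [slicedPolytope, ofPred_and, ofPred_forall]
  exact (isClosed_iInter fun i => isClosed_Icc.preimage (continuous_apply i)).inter <|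
    isClosed_iInter fun i => isClosed_iInter fun j => isClosed_iInter fun _ =>
      isClosed_le (by fun_prop) continuous_const

theorem slicedPolytope_subset_Icc (a : ℝ) : slicedPolytope G a ⊆ Icc 0 fun _ => a :=
  fun _ hx => ⟨fun i => (hx.1 i).1, fun i => (hx.1 i).2⟩

variable [Fintype V]

theorem volume_slicedPolytope_ne_top (a : ℝ) : volume (slicedPolytope G a) ≠ ⊤ :=
  measure_ne_top_of_subset (slicedPolytope_subset_Icc G a) measure_Icc_lt_top.ne

theorem svol_sub_svol (hab : a ≤ b) :
    svol G b - svol G a = volume.real (slicedPolytope G b \ slicedPolytope G a) :=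
  (measureReal_sdiff (slicedPolytope_mono G hab) (isClosed_slicedPolytope G a).measurableSet
    (volume_slicedPolytope_ne_top G b)).symm

end SlicedPolytope

section BlockCylinder

variable {V : Type*} {n : ℕ}

def blockCylinder (a : Fin n) (A : Set (V → ℝ)) (c : ℝ) : Set (Fin n × V → ℝ) :=
  {x | (fun v => x (a, v)) ∈ A ∧ ∀ q : Fin n × V, q.1 ≠ a → x q ∈ Icc 0 c}

def blockEquiv (a : Fin n) : V ≃ {q : Fin n × V // q.1 = a} where
  toFun v := ⟨(a, v), rfl⟩
  invFun q := q.1.2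
  left_inv _ := rfl
  right_inv := by rintro ⟨⟨b, v⟩, rfl⟩; rfl

theorem blockCylinder_eq_preimage (a : Fin n) (A : Set (V → ℝ)) (c : ℝ) :
    blockCylinder a A c =
      MeasurableEquiv.piEquivPiSubtypeProd (fun _ => ℝ) (fun q : Fin n × V => q.1 = a) ⁻¹'
        (((MeasurableEquiv.piCongrLeft (fun _ => ℝ) (blockEquiv a)).symm ⁻¹' A) ×ˢ
          univ.pi fun _ => Icc 0 c) := by
  ext x
  simp only [blockCylinder, mem_ofPred_eq, mem_preimage, mem_prod, mem_univ_pi]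
  exact and_congr Iff.rfl ⟨fun h q => h q q.2, fun h q hq => h ⟨q, hq⟩⟩

variable [Fintype V]

theorem card_subtype_fst_ne (a : Fin n) :
    Fintype.card {q : Fin n × V // q.1 ≠ a} = Fintype.card V * (n - 1) := by
  rw [Fintype.card_subtype_compl, Fintype.card_congr (blockEquiv a).symm, Fintype.card_prod,
    Fintype.card_fin, Nat.mul_sub_one, mul_comm]

theorem measurableSet_blockCylinder (a : Fin n) {A : Set (V → ℝ)} (hA : MeasurableSet A)
    (c : ℝ) : MeasurableSet (blockCylinder a A c) := by
  rw [blockCylinder_eq_preimage]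
  exact MeasurableEquiv.measurableSet_preimage _ |>.2 <|
    (MeasurableEquiv.measurableSet_preimage _ |>.2 hA).prod
      (MeasurableSet.univ_pi fun _ => measurableSet_Icc)

theorem volume_blockCylinder (a : Fin n) (A : Set (V → ℝ)) (c : ℝ) :
    volume (blockCylinder a A c) =
      volume A * ENNReal.ofReal c ^ (Fintype.card V * (n - 1)) := by
  rw [blockCylinder_eq_preimage,
    (volume_preserving_piEquivPiSubtypeProd _ _).measure_preimage_equiv,
    Measure.volume_eq_prod, Measure.prod_prod,
    ((volume_measurePreserving_piCongrLeft _ _).symm _).measure_preimage_equiv, volume_pi_pi]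
  simp only [Real.volume_Icc, sub_zero, Finset.prod_const, Finset.card_univ, card_subtype_fst_ne]

end BlockCylinder

section JoinPow

variable {V : Type*} {G : SimpleGraph V} {n : ℕ} {r s : ℝ}

theorem block_mem_slicedPolytope {x : Fin n × V → ℝ}
    (hx : x ∈ slicedPolytope (joinPow G n) r) (a : Fin n) :
    (fun v => x (a, v)) ∈ slicedPolytope G r :=
  ⟨fun v => hx.1 (a, v), fun _ _ hij => hx.2 (Or.inr ⟨rfl, hij⟩)⟩

theorem sdiff_subset_iUnion_blockCylinder :
    slicedPolytope (joinPow G n) r \ slicedPolytope (joinPow G n) s ⊆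
      ⋃ a, blockCylinder a (slicedPolytope G r \ slicedPolytope G s) (1 - s) := by
  rintro x ⟨hxr, hxs⟩
  obtain ⟨⟨a, v⟩, hav⟩ : ∃ q, s < x q := by
    by_contra! h
    exact hxs ⟨fun q => ⟨(hxr.1 q).1, h q⟩, hxr.2⟩
  refine mem_iUnion.2 ⟨a, ⟨block_mem_slicedPolytope hxr a, fun h => ?_⟩, fun q hq => ?_⟩
  · exact (h.1 v).2.not_gt hav
  · have := hxr.2 (show (joinPow G n).Adj q (a, v) from Or.inl hq)
    exact ⟨(hxr.1 q).1, by linarith⟩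

theorem iUnion_blockCylinder_subset_sdiff (hr : 1 / 2 ≤ r) :
    (⋃ a, blockCylinder a (slicedPolytope G r \ slicedPolytope G s) (1 - r)) ⊆
      slicedPolytope (joinPow G n) r \ slicedPolytope (joinPow G n) s := by
  simp only [subset_def, mem_iUnion]
  rintro x ⟨a, ⟨hxa, hxa'⟩, hother⟩
  have hbound : ∀ b v, x (b, v) ∈ Icc 0 r ∧ (b ≠ a → x (b, v) ≤ 1 - r) := by
    intro b v
    by_cases hb : b = a
    · subst hb
      exact ⟨hxa.1 v, absurd rfl⟩
    · have := hother (b, v) hb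
      exact ⟨⟨this.1, by linarith [this.2]⟩, fun _ => this.2⟩
  refine ⟨⟨fun q => (hbound q.1 q.2).1, ?_⟩,
    fun h => hxa' ⟨fun v => ⟨(hxa.1 v).1, (h.1 (a, v)).2⟩, hxa.2⟩⟩
  rintro ⟨b, i⟩ ⟨c, j⟩ (hbc | ⟨rfl, hij⟩)
  · by_cases hb : b = a
    · subst hb
      linarith [(hbound b i).1.2, (hbound c j).2 (Ne.symm hbc)]
    · linarith [(hbound b i).2 hb, (hbound c j).1.2]
  · by_cases hb : b = a
    · subst hb
      exact hxa.2 hij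
    · linarith [(hbound b i).2 hb, (hbound b j).2 hb]

theorem pairwise_disjoint_blockCylinder {A : Set (V → ℝ)} {c : ℝ}
    (hA : Disjoint A (Icc 0 fun _ => c)) :
    Pairwise (Disjoint on fun a : Fin n => blockCylinder a A c) := by
  intro a b hab
  refine Set.disjoint_left.2 fun x hxa hxb => hA.notMem_of_mem_left hxb.1 ⟨?_, ?_⟩ <;>
    intro v
  exacts [(hxa.2 (b, v) (Ne.symm hab)).1, (hxa.2 (b, v) (Ne.symm hab)).2]

end JoinPow

section Sandwich

variable {V : Type*} [Fintype V] (G : SimpleGraph V) (n : ℕ) {r s : ℝ}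

theorem volume_sdiff_joinPow_le :
    volume (slicedPolytope (joinPow G n) r \ slicedPolytope (joinPow G n) s) ≤
      n * (volume (slicedPolytope G r \ slicedPolytope G s) *
        ENNReal.ofReal (1 - s) ^ (Fintype.card V * (n - 1))) :=
  calc
    _ ≤ volume (⋃ a, blockCylinder a (slicedPolytope G r \ slicedPolytope G s) (1 - s)) :=
      measure_mono sdiff_subset_iUnion_blockCylinder
    _ ≤ ∑ a, volume (blockCylinder a (slicedPolytope G r \ slicedPolytope G s) (1 - s)) :=
      measure_iUnion_fintype_le _ _
    _ = _ := by simp [volume_blockCylinder]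

theorem le_volume_sdiff_joinPow (hr : 1 / 2 ≤ r) (hs : 1 - r ≤ s) :
    n * (volume (slicedPolytope G r \ slicedPolytope G s) *
        ENNReal.ofReal (1 - r) ^ (Fintype.card V * (n - 1))) ≤
      volume (slicedPolytope (joinPow G n) r \ slicedPolytope (joinPow G n) s) := by
  have hA : Disjoint (slicedPolytope G r \ slicedPolytope G s) (Icc 0 fun _ => 1 - r) :=
    disjoint_left.2 fun y ⟨hyr, hys⟩ hy =>
      hys ⟨fun v => ⟨hy.1 v, (hy.2 v).trans hs⟩, hyr.2⟩
  have hmeas : MeasurableSet (slicedPolytope G r \ slicedPolytope G s) :=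
    (isClosed_slicedPolytope G r).measurableSet.diff (isClosed_slicedPolytope G s).measurableSet
  calc
    _ = ∑ a : Fin n,
          volume (blockCylinder a (slicedPolytope G r \ slicedPolytope G s) (1 - r)) := by
      simp [volume_blockCylinder]
    _ = volume (⋃ a, blockCylinder a (slicedPolytope G r \ slicedPolytope G s) (1 - r)) := by
      rw [measure_iUnion (pairwise_disjoint_blockCylinder hA)
        fun a => measurableSet_blockCylinder a hmeas _, tsum_fintype]
    _ ≤ _ := measure_mono (iUnion_blockCylinder_subset_sdiff hr)

theorem svol_joinPow_sub_mem_Icc (hs : 1 / 2 ≤ s) (hsr : s ≤ r) (hr : r ≤ 1) :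
    svol (joinPow G n) r - svol (joinPow G n) s ∈
      Icc (n * (1 - r) ^ (Fintype.card V * (n - 1)) * (svol G r - svol G s))
        (n * (1 - s) ^ (Fintype.card V * (n - 1)) * (svol G r - svol G s)) := by
  have htoReal : ∀ c : ℝ, 0 ≤ c →
      (n * (volume (slicedPolytope G r \ slicedPolytope G s) *
        ENNReal.ofReal c ^ (Fintype.card V * (n - 1)))).toReal =
      n * c ^ (Fintype.card V * (n - 1)) * (svol G r - svol G s) := by
    intro c hc
    simp only [ENNReal.toReal_mul, ENNReal.toReal_natCast, ENNReal.toReal_pow,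
      ENNReal.toReal_ofReal hc, svol_sub_svol G hsr, measureReal_def]
    ring
  have hfin : volume (slicedPolytope G r \ slicedPolytope G s) ≠ ⊤ :=
    measure_ne_top_of_subset sdiff_subset (volume_slicedPolytope_ne_top G r)
  rw [svol_sub_svol (joinPow G n) hsr, ← htoReal _ (by linarith), ← htoReal _ (by linarith),
    measureReal_def]
  exact ⟨ENNReal.toReal_mono (measure_ne_top_of_subset sdiff_subset
      (volume_slicedPolytope_ne_top _ r)) (le_volume_sdiff_joinPow G n (by linarith) (by linarith)),
    ENNReal.toReal_mono (by finiteness) (volume_sdiff_joinPow_le G n)⟩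

theorem svol_joinPow_sub_mem_uIcc {t : ℝ} (ht : t ∈ Icc (1 / 2 : ℝ) 1)
    (hr : r ∈ Icc (1 / 2 : ℝ) 1) :
    svol (joinPow G n) t - svol (joinPow G n) r ∈
      uIcc (n * (1 - r) ^ (Fintype.card V * (n - 1)) * (svol G t - svol G r))
        (n * (1 - t) ^ (Fintype.card V * (n - 1)) * (svol G t - svol G r)) := by
  rcases le_total r t with hrt | htr
  · exact Icc_subset_uIcc' (svol_joinPow_sub_mem_Icc G n hr.1 hrt ht.2)
  · have h := svol_joinPow_sub_mem_Icc G n ht.1 htr hr.2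
    exact Icc_subset_uIcc' ⟨by linarith [h.2], by linarith [h.1]⟩

end Sandwich

theorem deriv_svol_joinPow_general (k : ℕ) (G : SimpleGraph (Fin k)) (n : ℕ)
    (r : ℝ) (hr0 : 1 / 2 ≤ r) (hr1 : r ≤ 1)
    (hG : DifferentiableAt ℝ (svol G) r)
    (hnG : DifferentiableAt ℝ (svol (joinPow G n)) r) :
    deriv (svol (joinPow G n)) r =
      (n : ℝ) * (1 - r) ^ (k * (n - 1)) * deriv (svol G) r := by
  have hr : r ∈ Icc (1 / 2 : ℝ) 1 := ⟨hr0, hr1⟩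
  refine deriv_eq_mul_deriv_of_mem_uIcc (c := fun t => (n : ℝ) * (1 - t) ^ (k * (n - 1)))
    (uniqueDiffOn_Icc (by norm_num) r hr) hnG hG (by fun_prop) fun t ht => ?_
  simpa using svol_joinPow_sub_mem_uIcc G n ht hr

/-- For a graph `G` with `k` vertices and `1/2 ≤ r ≤ 1` a differentiability point
of the sliced volume functions:
`(d/dr) vol(nG, r) = n·(1-r)^{k(n-1)}·(d/dr) vol(G, r)`. -/
theorem deriv_svol_joinPow (k : ℕ) (G : SimpleGraph (Fin k)) (n : ℕ) (hn : 1 ≤ n)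
    (r : ℝ) (hr0 : 1 / 2 ≤ r) (hr1 : r ≤ 1)
    (hG : DifferentiableAt ℝ (svol G) r)
    (hnG : DifferentiableAt ℝ (svol (joinPow G n)) r) :
    deriv (svol (joinPow G n)) r =
      (n : ℝ) * (1 - r) ^ (k * (n - 1)) * deriv (svol G) r :=
  deriv_svol_joinPow_general k G n r hr0 hr1 hG hnG
end

section
/- For every n ≥ 1 and every 1/2 ≤ r ≤ 1, the sliced volume of the graph polytope of the complete graph K_n satisfies vol(K_n, r) = 2^{1−n} − (1−r)^n. -/
/-!
Sort the points of the slice by their largest coordinate. If it is at most `1/2`, the point lies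
in the cube `[0, 1/2]^n`, and every such point satisfies all edge constraints. Otherwise exactly one
coordinate `x_i = t ∈ (1/2, r]` exceeds `1/2`, and the constraints say precisely that all other
coordinates lie in `[0, 1 - t]`. Fubini over `t` gives `∫_{1/2}^r (1 - t)^(n-1) dt` for each of the
`n` choices of `i`, and `2^(-n) + ((1/2)^n - (1 - r)^n) = 2^(1-n) - (1 - r)^n`.
-/

open MeasureTheory Set Function

section CubeRegion

variable {ι : Type*} [Fintype ι]

lemma volume_Icc_zero_const (a : ℝ) :
    volume (Icc (0 : ι → ℝ) fun _ => a) = ENNReal.ofReal a ^ Fintype.card ι := by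
  simp [Real.volume_Icc_pi]

def cubeRegion (s : Set ℝ) (f : ℝ → ℝ) : Set (ℝ × (ι → ℝ)) :=
  {p | p.1 ∈ s ∧ p.2 ∈ Icc 0 (fun _ => f p.1)}

lemma measurableSet_cubeRegion {s : Set ℝ} {f : ℝ → ℝ} (hs : MeasurableSet s)
    (hf : Measurable f) : MeasurableSet (cubeRegion (ι := ι) s f) :=
  (measurable_fst hs).inter <|
    (measurableSet_le measurable_const measurable_snd).inter <|
      measurableSet_le measurable_snd (measurable_pi_lambda _ fun _ => hf.comp measurable_fst)

lemma volume_cubeRegion {s : Set ℝ} {f : ℝ → ℝ} (hs : MeasurableSet s) (hf : Measurable f) :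
    volume (cubeRegion (ι := ι) s f) = ∫⁻ t in s, ENNReal.ofReal (f t) ^ Fintype.card ι := by
  have hfiber (t : ℝ) : volume (Prod.mk t ⁻¹' cubeRegion (ι := ι) s f) =
      s.indicator (fun t => ENNReal.ofReal (f t) ^ Fintype.card ι) t := by
    by_cases ht : t ∈ s
    · have : Prod.mk t ⁻¹' cubeRegion s f = Icc (0 : ι → ℝ) (fun _ => f t) := by
        ext y; simp [cubeRegion, ht]
      simp [this, ht, volume_Icc_zero_const]
    · have : Prod.mk t ⁻¹' cubeRegion (ι := ι) s f = ∅ := by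
        ext y; simp [cubeRegion, ht]
      simp [this, ht]
  rw [Measure.volume_eq_prod, Measure.prod_apply (measurableSet_cubeRegion hs hf)]
  simp_rw [hfiber]
  exact lintegral_indicator hs _

end CubeRegion

lemma setLIntegral_Ioc_ofReal_one_sub_pow {a b : ℝ} (hab : a ≤ b) (hb : b ≤ 1) (m : ℕ) :
    ∫⁻ t in Ioc a b, ENNReal.ofReal (1 - t) ^ m =
      ENNReal.ofReal (((1 - a) ^ (m + 1) - (1 - b) ^ (m + 1)) / (m + 1)) := by
  have hpow : ∀ t ∈ Ioc a b, ENNReal.ofReal (1 - t) ^ m = ENNReal.ofReal ((1 - t) ^ m) :=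
    fun t ht => (ENNReal.ofReal_pow (by linarith [ht.2]) m).symm
  rw [setLIntegral_congr_fun measurableSet_Ioc hpow, ← ofReal_integral_eq_lintegral_ofReal]
  · rw [← intervalIntegral.integral_of_le hab,
      intervalIntegral.integral_comp_sub_left (fun t => t ^ m) 1, integral_pow]
  · exact (continuous_const.sub continuous_id).pow m |>.integrableOn_Ioc
  · exact (ae_restrict_iff' measurableSet_Ioc).2 <| ae_of_all _ fun t ht =>
      pow_nonneg (by linarith [ht.2]) m

section PeakRegion

variable {V : Type*}

def peakRegion (r : ℝ) (i : V) : Set (V → ℝ) :=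
  {x | x i ∈ Ioc (1 / 2) r ∧ ∀ j, j ≠ i → x j ∈ Icc 0 (1 - x i)}

lemma disjoint_Icc_peakRegion (r : ℝ) (i : V) :
    Disjoint (Icc (0 : V → ℝ) (fun _ => 1 / 2)) (peakRegion r i) :=
  disjoint_left.2 fun _ hx hx' => (hx.2 i).not_gt hx'.1.1

lemma pairwise_disjoint_peakRegion (r : ℝ) :
    Pairwise (Disjoint on (peakRegion r : V → Set (V → ℝ))) := fun i j hij =>
  disjoint_left.2 fun x hi hj => by
    linarith [hi.1.1, hj.1.1, (hj.2 i hij).2]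

lemma setOf_completeGraph_eq_union {r : ℝ} (hr : 1 / 2 ≤ r) :
    {x : V → ℝ | (∀ i, x i ∈ Icc 0 r) ∧ ∀ ⦃i j⦄, (⊤ : SimpleGraph V).Adj i j → x i + x j ≤ 1} =
      Icc 0 (fun _ => 1 / 2) ∪ ⋃ i, peakRegion r i := by
  ext x
  simp only [peakRegion, mem_union, mem_iUnion, SimpleGraph.top_adj, mem_Icc,
    mem_Ioc, Pi.le_def, Pi.zero_apply]
  constructor
  · rintro ⟨hbox, hsum⟩
    by_cases hsmall : ∀ i, x i ≤ 1 / 2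
    · exact Or.inl ⟨fun i => (hbox i).1, hsmall⟩
    · push Not at hsmall
      obtain ⟨i, hi⟩ := hsmall
      exact Or.inr ⟨i, ⟨hi, (hbox i).2⟩, fun j hj => ⟨(hbox j).1, by linarith [hsum hj]⟩⟩
  · rintro (⟨hnonneg, hsmall⟩ | ⟨i, ⟨hi, hir⟩, hrest⟩)
    · exact ⟨fun i => ⟨hnonneg i, (hsmall i).trans hr⟩,
        fun i j _ => by linarith [hsmall i, hsmall j]⟩
    · have hlow : ∀ j, j ≠ i → x j < 1 / 2 := fun j hj => by linarith [(hrest j hj).2]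
      refine ⟨fun j => ?_, fun j k hjk => ?_⟩
      · rcases eq_or_ne j i with rfl | hj
        · exact ⟨by linarith, hir⟩
        · exact ⟨(hrest j hj).1, by linarith [hlow j hj]⟩
      · rcases eq_or_ne j i with rfl | hj
        · linarith [(hrest k hjk.symm).2]
        rcases eq_or_ne k i with rfl | hk
        · linarith [(hrest j hjk).2]
        linarith [hlow j hj, hlow k hk]

end PeakRegion

section FinPeakRegion

variable {m : ℕ} (r : ℝ) (i : Fin (m + 1))

lemma peakRegion_eq_preimage :
    peakRegion r i = MeasurableEquiv.piFinSuccAbove (fun _ => ℝ) i ⁻¹'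
      cubeRegion (Ioc (1 / 2) r) (fun t => 1 - t) := by
  ext x
  simp [peakRegion, cubeRegion, Pi.le_def, Fin.forall_iff_succAbove i, Fin.removeNth,
    Fin.succAbove_ne, forall_and]

lemma measurableSet_cubeRegion_one_sub (s : Set ℝ) (hs : MeasurableSet s) :
    MeasurableSet (cubeRegion (ι := Fin m) s fun t => 1 - t) :=
  measurableSet_cubeRegion hs (by fun_prop)

lemma measurableSet_peakRegion : MeasurableSet (peakRegion r i) := by
  rw [peakRegion_eq_preimage]
  exact MeasurableEquiv.measurable _ (measurableSet_cubeRegion_one_sub _ measurableSet_Ioc)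

lemma volume_peakRegion (hr0 : 1 / 2 ≤ r) (hr1 : r ≤ 1) :
    volume (peakRegion r i) =
      ENNReal.ofReal (((1 / 2) ^ (m + 1) - (1 - r) ^ (m + 1)) / (m + 1)) := by
  rw [peakRegion_eq_preimage, (volume_preserving_piFinSuccAbove (fun _ => ℝ) i).measure_preimage
      (measurableSet_cubeRegion_one_sub _ measurableSet_Ioc).nullMeasurableSet,
    volume_cubeRegion measurableSet_Ioc (by fun_prop), Fintype.card_fin,
    setLIntegral_Ioc_ofReal_one_sub_pow hr0 hr1]
  norm_num

end FinPeakRegion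

/-- For `n ≥ 1` and `1/2 ≤ r ≤ 1`, `vol(K_n, r) = 2^{1-n} - (1-r)^n`. -/
theorem svol_complete (n : ℕ) (hn : 1 ≤ n) (r : ℝ) (hr0 : 1 / 2 ≤ r) (hr1 : r ≤ 1) :
    svol (⊤ : SimpleGraph (Fin n)) r = (2 : ℝ) ^ ((1 : ℤ) - (n : ℤ)) - (1 - r) ^ n := by
  obtain ⟨m, rfl⟩ : ∃ m, n = m + 1 := ⟨n - 1, by omega⟩
  have hcorner : (1 - r) ^ (m + 1) ≤ (1 / 2) ^ (m + 1) :=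
    pow_le_pow_left₀ (by linarith) (by linarith) _
  have hvol : volume {x : Fin (m + 1) → ℝ | (∀ i, x i ∈ Icc 0 r) ∧
      ∀ ⦃i j⦄, (⊤ : SimpleGraph (Fin (m + 1))).Adj i j → x i + x j ≤ 1} =
      ENNReal.ofReal ((1 / 2) ^ (m + 1) + ((1 / 2) ^ (m + 1) - (1 - r) ^ (m + 1))) := by
    rw [setOf_completeGraph_eq_union hr0,
      measure_union (disjoint_iUnion_right.2 (disjoint_Icc_peakRegion r))
        (MeasurableSet.iUnion (measurableSet_peakRegion r)),
      measure_iUnion (pairwise_disjoint_peakRegion r) (measurableSet_peakRegion r), tsum_fintype,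
      volume_Icc_zero_const]
    simp only [volume_peakRegion r _ hr0 hr1, Finset.sum_const, Finset.card_univ,
      Fintype.card_fin, nsmul_eq_mul]
    rw [← ENNReal.ofReal_pow (by norm_num), ← ENNReal.ofReal_natCast,
      ← ENNReal.ofReal_mul (by positivity), Nat.cast_succ, mul_div_cancel₀ _ (by positivity),
      ENNReal.ofReal_add (by positivity) (by linarith)]
  have htwo : (2 : ℝ) ^ ((1 : ℤ) - ((m + 1 : ℕ) : ℤ)) = 2 * (1 / 2) ^ (m + 1) := by
    rw [zpow_sub₀ two_ne_zero, zpow_one, zpow_natCast, one_div_pow, mul_one_div]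
  rw [svol, hvol, ENNReal.toReal_ofReal (by positivity), htwo]
  ring
end

section
/- For all positive integers n and k, the volume of the graph polytope of the complete n-partite graph nD_k (the join of n copies of the null graph D_k on k vertices) is vol(nD_k) = 2^{−kn} + n·2^{−kn}·(1/C(kn, k))·Σ_{i=0}^{k−1} C(kn, i). -/
/-!
Let `r : V → ι` sort the vertices into parts, so that `(⊤ : SimpleGraph ι).comap r` is the
complete multipartite graph with parts the fibres of `r`. A point of its polytope either has all
coordinates at most `1/2` (a cube of volume `2^{-|V|}`), or some coordinate exceeds `1/2`; if
`x v = t` is the largest coordinate of its part, the other coordinates of that part range over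
`[0, t]` and, as `v` is adjacent to everything outside its part, all remaining coordinates range
over `[0, 1 - t]`. These pieces overlap only in null sets, so the volume is
`2^{-|V|} + ∑_v ∫_{1/2}^1 t^{m_v - 1} (1 - t)^{|V| - m_v} dt` with `m_v` the size of the part
of `v`. Integration by parts evaluates this incomplete beta integral as a binomial tail:
`k C(m, k) ∫_{1/2}^1 t^{k-1} (1 - t)^{m-k} dt = 2^{-m} ∑_{i<k} C(m, i)`.
-/

open MeasureTheory

open Finset Function

theorem integral_half_one_pow_mul_one_sub_pow_recurrence (a b : ℕ) :
    (b + 1) * ∫ t in (1/2 : ℝ)..1, t ^ (a + 1) * (1 - t) ^ b =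
      (a + 1) * (∫ t in (1/2 : ℝ)..1, t ^ a * (1 - t) ^ (b + 1)) + 1 / 2 ^ (a + b + 2) := by
  have hderiv (t : ℝ) : HasDerivAt (fun t => t ^ (a + 1) * (1 - t) ^ (b + 1))
      ((a + 1) * (t ^ a * (1 - t) ^ (b + 1)) - (b + 1) * (t ^ (a + 1) * (1 - t) ^ b)) t := by
    refine ((hasDerivAt_pow (a + 1) t).fun_mul
      (((hasDerivAt_id' t).const_sub 1).fun_pow (b + 1))).congr_deriv ?_
    simp only [add_tsub_cancel_right]
    push_cast
    ring
  have hftc := intervalIntegral.integral_eq_sub_of_hasDerivAt (a := 1/2) (b := 1)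
    (fun t _ => hderiv t) (by apply Continuous.intervalIntegrable; fun_prop)
  rw [intervalIntegral.integral_sub, intervalIntegral.integral_const_mul,
    intervalIntegral.integral_const_mul] at hftc
  · norm_num at hftc
    rw [show (1 / 2 ^ (a + b + 2) : ℝ) = (1/2) ^ (a + 1) * (1/2) ^ (b + 1) by
      rw [← pow_add, one_div_pow]; ring_nf]
    linarith
  all_goals apply Continuous.intervalIntegrable; fun_prop

theorem succ_mul_choose_mul_integral_half_one_pow_mul_one_sub_pow (a b : ℕ) :
    (a + 1) * ((a + b + 1).choose (a + 1) : ℝ) * ∫ t in (1/2 : ℝ)..1, t ^ a * (1 - t) ^ b =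
      (∑ i ∈ range (a + 1), ((a + b + 1).choose i : ℝ)) / 2 ^ (a + b + 1) := by
  induction a generalizing b with
  | zero =>
    have h := intervalIntegral.integral_comp_sub_left (fun s : ℝ => s ^ b) (a := 1/2) (b := 1) 1
    simp only [pow_zero, one_mul, h, integral_pow]
    norm_num
    rw [mul_div_cancel₀ _ (by positivity), one_div, inv_pow]
  | succ a ih =>
    have hchoose : ((a + b + 2).choose (a + 2) : ℝ) * (a + 2) =
        (a + b + 2).choose (a + 1) * (b + 1) := by
      exact_mod_cast (Nat.choose_succ_right_eq (a + b + 2) (a + 1)).trans (by congr 1; omega)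
    have ih' := ih (b + 1)
    rw [show a + (b + 1) + 1 = a + b + 2 by ring] at ih'
    rw [show a + 1 + b + 1 = a + b + 2 by ring, sum_range_succ]
    push_cast
    set I := ∫ t in (1/2 : ℝ)..1, t ^ (a + 1) * (1 - t) ^ b
    calc ((a : ℝ) + 1 + 1) * (a + b + 2).choose (a + 2) * I
        = (a + b + 2).choose (a + 1) * ((b + 1) * I) := by linear_combination I * hchoose
      _ = _ := by
        rw [integral_half_one_pow_mul_one_sub_pow_recurrence, mul_add, ← mul_assoc,
          mul_comm _ ((a : ℝ) + 1), ih']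
        ring

theorem mul_choose_mul_integral_half_one_pow_mul_one_sub_pow {k m : ℕ} (hkm : k ≤ m) :
    k * (m.choose k : ℝ) * ∫ t in (1/2 : ℝ)..1, t ^ (k - 1) * (1 - t) ^ (m - k) =
      (∑ i ∈ range k, (m.choose i : ℝ)) / 2 ^ m := by
  obtain _ | a := k
  · simp
  obtain ⟨b, rfl⟩ : ∃ b, m = a + b + 1 := ⟨m - a - 1, by omega⟩
  simpa [show a + b + 1 - (a + 1) = b by omega] using
    succ_mul_choose_mul_integral_half_one_pow_mul_one_sub_pow a b

section
variable {V : Type*} [Fintype V]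

theorem measurableSet_setOf_apply_mem_and_forall_ne_mem_Icc (v : V) {S : Set ℝ}
    (hS : MeasurableSet S) {f : V → ℝ → ℝ} (hf : ∀ u, Measurable (f u)) :
    MeasurableSet {x : V → ℝ | x v ∈ S ∧ ∀ u ≠ v, x u ∈ Set.Icc 0 (f u (x v))} := by
  simp only [Set.ofPred_and, Set.ofPred_forall]
  measurability

theorem volume_setOf_apply_mem_and_forall_ne_mem_Icc [DecidableEq V] (v : V) {S : Set ℝ}
    (hS : MeasurableSet S) {f : V → ℝ → ℝ} (hf : ∀ u, Measurable (f u)) :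
    volume {x : V → ℝ | x v ∈ S ∧ ∀ u ≠ v, x u ∈ Set.Icc 0 (f u (x v))} =
      ∫⁻ t in S, ∏ u ∈ univ.erase v, ENNReal.ofReal (f u t) := by
  let e : (V → ℝ) ≃ᵐ ℝ × ({u // u ≠ v} → ℝ) :=
    (MeasurableEquiv.piEquivPiSubtypeProd (fun _ => ℝ) (· = v)).trans
      ((MeasurableEquiv.funUnique _ ℝ).prodCongr (MeasurableEquiv.refl _))
  have he : MeasurePreserving e volume volume := by
    refine (volume_preserving_piEquivPiSubtypeProd _ _).trans ?_
    rw [Measure.volume_eq_prod, Measure.volume_eq_prod,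
      Subsingleton.elim (Subtype.fintype (· = v)) Unique.fintype]
    exact (volume_preserving_funUnique {u // u = v} ℝ).prod
      (.id (volume : Measure ({u // u ≠ v} → ℝ)))
  let B : Set (ℝ × ({u // u ≠ v} → ℝ)) :=
    {p | p.1 ∈ S ∧ ∀ u : {u // u ≠ v}, p.2 u ∈ Set.Icc 0 (f u p.1)}
  have hB : MeasurableSet B := by measurability
  have hpre : {x : V → ℝ | x v ∈ S ∧ ∀ u ≠ v, x u ∈ Set.Icc 0 (f u (x v))} = e ⁻¹' B :=
    Set.ext fun x => ⟨fun ⟨h1, h2⟩ => ⟨h1, fun u => h2 u u.2⟩,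
      fun ⟨h1, h2⟩ => ⟨h1, fun u hu => h2 ⟨u, hu⟩⟩⟩
  have hslice (t : ℝ) : volume (Prod.mk t ⁻¹' B) =
      S.indicator (fun t => ∏ u : {u // u ≠ v}, ENNReal.ofReal (f u t)) t := by
    by_cases ht : t ∈ S
    · have : Prod.mk t ⁻¹' B = Set.univ.pi fun u : {u // u ≠ v} => Set.Icc 0 (f u t) := by
        ext y
        simp [B, ht, -Set.pi_univ_Icc]
      simp [this, volume_pi_pi, ht, -Set.pi_univ_Icc]
    · have : Prod.mk t ⁻¹' B = ∅ := by
        ext y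
        simp [B, ht]
      simp [this, ht]
  rw [hpre, he.measure_preimage hB.nullMeasurableSet, Measure.volume_eq_prod,
    Measure.prod_apply hB, lintegral_congr hslice, lintegral_indicator hS]
  simp only [prod_subtype (univ.erase v) (p := (· ≠ v)) (by simp)]

theorem volume_setOf_apply_eq_apply_s13 [DecidableEq V] {v w : V} (h : v ≠ w) :
    volume {x : V → ℝ | x v = x w} = 0 := by
  let L : (V → ℝ) →ₗ[ℝ] ℝ := LinearMap.proj (R := ℝ) (φ := fun _ : V => ℝ) v - LinearMap.proj w
  have hker : {x : V → ℝ | x v = x w} = (LinearMap.ker L : Set (V → ℝ)) := by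
    ext x
    simp [L, sub_eq_zero]
  rw [hker]
  refine Measure.addHaar_submodule _ _ fun htop => ?_
  have : Pi.single v 1 ∈ LinearMap.ker L := htop ▸ Submodule.mem_top
  simp [L, h.symm] at this

end

def graphPolytope {V : Type*} (G : SimpleGraph V) : Set (V → ℝ) :=
  {x | (∀ i, x i ∈ Set.Icc 0 1) ∧ ∀ ⦃i j⦄, G.Adj i j → x i + x j ≤ 1}

section
variable {V ι : Type*} [DecidableEq ι] (r : V → ι)

def dominantRegion (v : V) : Set (V → ℝ) :=
  {x | x v ∈ Set.Ioc (1/2) 1 ∧ ∀ u ≠ v, x u ∈ Set.Icc 0 (if r u = r v then x v else 1 - x v)}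

variable {r}

theorem mem_Icc_of_mem_dominantRegion {x : V → ℝ} {v : V} (hx : x ∈ dominantRegion r v)
    (u : V) : x u ∈ Set.Icc 0 (if r u = r v then x v else 1 - x v) := by
  by_cases huv : u = v
  · subst huv
    rw [if_pos rfl]
    exact ⟨by linarith [hx.1.1], le_rfl⟩
  · exact hx.2 u huv

theorem dominantRegion_subset_graphPolytope (v : V) :
    dominantRegion r v ⊆ graphPolytope ((⊤ : SimpleGraph ι).comap r) := by
  intro x hx
  have hv := hx.1
  have hb := mem_Icc_of_mem_dominantRegion hx
  refine ⟨fun u => ⟨(hb u).1, ?_⟩, fun i j hij => ?_⟩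
  · have := (hb u).2
    split_ifs at this <;> linarith [hv.1, hv.2]
  · have hi := (hb i).2
    have hj := (hb j).2
    simp only [SimpleGraph.comap_adj, SimpleGraph.top_adj] at hij
    split_ifs at hi hj with h1 h2 h2
    · exact absurd (h1.trans h2.symm) hij
    all_goals linarith [hv.1]

theorem graphPolytope_comap_top [Fintype V] :
    graphPolytope ((⊤ : SimpleGraph ι).comap r) =
      Set.univ.pi (fun _ => Set.Icc 0 (1/2)) ∪ ⋃ v, dominantRegion r v := by
  refine subset_antisymm (fun x hx => ?_) (Set.union_subset (fun x hx => ?_)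
    (Set.iUnion_subset dominantRegion_subset_graphPolytope))
  · by_cases hsmall : ∀ u, x u ≤ 1/2
    · exact Or.inl fun u _ => ⟨(hx.1 u).1, hsmall u⟩
    push Not at hsmall
    obtain ⟨w, hw⟩ := hsmall
    obtain ⟨v, hv, hmax⟩ := (univ.filter fun u => r u = r w).exists_max_image x ⟨w, by simp⟩
    simp only [mem_filter, mem_univ, true_and] at hv hmax
    refine Or.inr (Set.mem_iUnion.2 ⟨v, ⟨hw.trans_le (hmax w rfl), (hx.1 v).2⟩, fun u _ => ?_⟩)
    refine ⟨(hx.1 u).1, ?_⟩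
    split_ifs with h
    · exact hmax u (h.trans hv)
    · have := hx.2 (show ((⊤ : SimpleGraph ι).comap r).Adj u v from h)
      linarith
  · simp only [Set.mem_pi, Set.mem_univ, true_implies, Set.mem_Icc] at hx
    exact ⟨fun u => ⟨(hx u).1, (hx u).2.trans (by norm_num)⟩,
      fun i j _ => by linarith [(hx i).2, (hx j).2]⟩

variable [Fintype V]

theorem measurableSet_dominantRegion (v : V) : MeasurableSet (dominantRegion r v) :=
  measurableSet_setOf_apply_mem_and_forall_ne_mem_Icc v measurableSet_Ioc
    (f := fun u t => if r u = r v then t else 1 - t) fun u => by split_ifs <;> fun_prop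

variable [DecidableEq V]

theorem pairwise_aedisjoint_dominantRegion :
    Pairwise (AEDisjoint volume on (dominantRegion r)) := by
  intro v w hvw
  by_cases hpart : r v = r w
  · refine measure_mono_null (fun x ⟨hxv, hxw⟩ => ?_) (volume_setOf_apply_eq_apply_s13 hvw)
    have h1 := (hxv.2 w hvw.symm).2
    have h2 := (hxw.2 v hvw).2
    rw [if_pos hpart.symm] at h1
    rw [if_pos hpart] at h2
    exact le_antisymm h2 h1
  · refine (Set.disjoint_left.2 fun x hxv hxw => ?_).aedisjoint
    have h := (hxv.2 w hvw.symm).2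
    rw [if_neg (Ne.symm hpart)] at h
    linarith [hxv.1.1, hxw.1.1]

theorem volume_dominantRegion (v : V) :
    volume (dominantRegion r v) = ENNReal.ofReal (∫ t in (1/2 : ℝ)..1,
      t ^ (#{u | r u = r v} - 1) * (1 - t) ^ (Fintype.card V - #{u | r u = r v})) := by
  have hsame : #{u ∈ univ.erase v | r u = r v} = #{u | r u = r v} - 1 := by
    rw [filter_erase, card_erase_of_mem (by simp)]
  have hother : #{u ∈ univ.erase v | ¬r u = r v} = Fintype.card V - #{u | r u = r v} := by
    have h := card_filter_add_card_filter_not (s := univ) (fun u => r u = r v)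
    rw [filter_erase, erase_eq_of_notMem (by simp), ← card_univ, ← h]
    omega
  rw [dominantRegion, volume_setOf_apply_mem_and_forall_ne_mem_Icc v measurableSet_Ioc
    (f := fun u t => if r u = r v then t else 1 - t) fun u => by split_ifs <;> fun_prop,
    intervalIntegral.integral_of_le (by norm_num), ofReal_integral_eq_lintegral_ofReal]
  · refine setLIntegral_congr_fun measurableSet_Ioc fun t ht => ?_
    have ht0 : 0 ≤ t := by linarith [ht.1]
    have ht1 : 0 ≤ 1 - t := by linarith [ht.2]
    simp only [apply_ite ENNReal.ofReal, prod_ite, prod_const, hsame, hother]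
    rw [ENNReal.ofReal_mul (by positivity), ENNReal.ofReal_pow ht0, ENNReal.ofReal_pow ht1]
  · exact (by fun_prop : Continuous fun t : ℝ => t ^ _ * (1 - t) ^ _).integrableOn_Ioc
  · refine (ae_restrict_iff' measurableSet_Ioc).2 (ae_of_all _ fun t ht => ?_)
    have ht0 : 0 ≤ t := by linarith [ht.1]
    have ht1 : 0 ≤ 1 - t := by linarith [ht.2]
    positivity

theorem gvol_comap_top (r : V → ι) :
    gvol ((⊤ : SimpleGraph ι).comap r) = (1/2) ^ Fintype.card V + ∑ v, ∫ t in (1/2 : ℝ)..1,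
      t ^ (#{u | r u = r v} - 1) * (1 - t) ^ (Fintype.card V - #{u | r u = r v}) := by
  have hdisj : Disjoint (Set.univ.pi fun _ : V => Set.Icc (0 : ℝ) (1/2))
      (⋃ v, dominantRegion r v) :=
    Set.disjoint_iUnion_right.2 fun v => Set.disjoint_left.2 fun x hx hxv => by
      linarith [(hx v trivial).2, hxv.1.1]
  have hcube : volume (Set.univ.pi fun _ : V => Set.Icc (0 : ℝ) (1/2)) =
      ENNReal.ofReal ((1/2) ^ Fintype.card V) := by
    rw [volume_pi_pi]
    simp [Real.volume_Icc, ENNReal.ofReal_pow, ENNReal.inv_pow]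
  have hint (v : V) : 0 ≤ ∫ t in (1/2 : ℝ)..1,
      t ^ (#{u | r u = r v} - 1) * (1 - t) ^ (Fintype.card V - #{u | r u = r v}) :=
    intervalIntegral.integral_nonneg (by norm_num) fun t ht => by
      have : 0 ≤ t := by linarith [ht.1]
      have : 0 ≤ 1 - t := by linarith [ht.2]
      positivity
  change (volume (graphPolytope _)).toReal = _
  rw [graphPolytope_comap_top, measure_union hdisj (.iUnion measurableSet_dominantRegion),
    measure_iUnion₀ pairwise_aedisjoint_dominantRegion
      (fun v => (measurableSet_dominantRegion v).nullMeasurableSet), tsum_fintype, hcube]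
  simp only [volume_dominantRegion]
  rw [ENNReal.toReal_add (by simp) (by simp), ENNReal.toReal_sum (by simp),
    ENNReal.toReal_ofReal (by positivity)]
  simp only [ENNReal.toReal_ofReal (hint _)]

end

theorem joinPow_bot_eq_comap_top (n k : ℕ) :
    joinPow (⊥ : SimpleGraph (Fin k)) n = (⊤ : SimpleGraph (Fin n)).comap Prod.fst := by
  ext x y
  simp [joinPow]

theorem card_filter_fst_eq {α β : Type*} [Fintype α] [Fintype β] [DecidableEq α] (a : α) :
    #{u : α × β | u.1 = a} = Fintype.card β := by
  rw [← univ_product_univ, filter_product_left (· = a), card_product, filter_eq']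
  simp

theorem vol_joinPow_null_general (n k : ℕ) :
    gvol (joinPow (⊥ : SimpleGraph (Fin k)) n) =
      ((2 : ℝ) ^ (k * n))⁻¹ +
        (n : ℝ) * ((2 : ℝ) ^ (k * n))⁻¹ * (1 / ((k * n).choose k : ℝ)) *
          ∑ i ∈ Finset.range k, (((k * n).choose i : ℕ) : ℝ) := by
  rw [joinPow_bot_eq_comap_top, gvol_comap_top]
  simp only [card_filter_fst_eq, Fintype.card_prod, Fintype.card_fin, sum_const, card_univ,
    nsmul_eq_mul]
  rcases Nat.eq_zero_or_pos n with rfl | hn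
  · simp
  have hJ := mul_choose_mul_integral_half_one_pow_mul_one_sub_pow
    (Nat.le_mul_of_pos_right k hn)
  have hC : ((k * n).choose k : ℝ) ≠ 0 :=
    Nat.cast_ne_zero.2 (Nat.choose_pos (Nat.le_mul_of_pos_right k hn)).ne'
  rw [mul_comm n k, one_div, inv_pow, add_right_inj]
  rw [eq_div_iff (by positivity)] at hJ
  field_simp
  push_cast
  linear_combination (n : ℝ) * hJ

/-- The volume of the complete `n`-partite graph `nD_k` (the join of `n` copies of
the edgeless graph `D_k` on `k` vertices):
`vol(nD_k) = 2^{-kn} + n·2^{-kn}·(1/C(kn,k))·Σ_{i=0}^{k-1} C(kn,i)`. -/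
theorem vol_joinPow_null (n k : ℕ) (hn : 1 ≤ n) (hk : 1 ≤ k) :
    gvol (joinPow (⊥ : SimpleGraph (Fin k)) n) =
      ((2 : ℝ) ^ (k * n))⁻¹ +
        (n : ℝ) * ((2 : ℝ) ^ (k * n))⁻¹ * (1 / ((k * n).choose k : ℝ)) *
          ∑ i ∈ Finset.range k, (((k * n).choose i : ℕ) : ℝ) :=
  vol_joinPow_null_general n k
end

section
/- Let T be the linear operator on L²(0,1) defined by (Tg)(t) = ∫_0^{1−t} g(s) ds. Then T is a compact self-adjoint operator, and for every integer k ∈ ℤ the function t ↦ cos(π(4k+1)t/2) is an eigenfunction of T with eigenvalue 2/(π(4k+1)); in particular T(cos(π(4k+1)·/2)) = (2/(π(4k+1)))·cos(π(4k+1)·/2) in L²(0,1). -/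
/-!
`T` is the integral operator on `L²(0,1)` with kernel `1{s + t < 1}`. This kernel is symmetric,
so `T` is self-adjoint by Fubini. Writing `(Tg)(t) = ⟪1_{(-∞, 1-t)}, g⟫`, the slice
`t ↦ 1_{(-∞, 1-t)} ∈ L²(0,1)` is `1/2`-Hölder; freezing `t` at the grid point `⌊nt⌋/n` gives
finite-rank operators within `n^{-1/2}` of `T` in operator norm, so `T` is compact. Finally
`∫₀^{1-t} cos(cs) ds = (sin c cos(ct) - cos c sin(ct))/c`, which is `cos(ct)/c` for
`c = π(4k+1)/2`, where `cos c = 0` and `sin c = 1`.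
-/

open MeasureTheory Real

/-- The measure defining `L²(0,1)`: Lebesgue measure restricted to `(0,1)`. -/
noncomputable def mu01 : Measure ℝ := volume.restrict (Set.Ioo (0:ℝ) 1)

open Set Filter Topology

theorem MeasureTheory.Lp.norm_le_of_ae_bound_of_isProbabilityMeasure {α E : Type*}
    [MeasurableSpace α] [NormedAddCommGroup E] {p : ENNReal} [Fact (1 ≤ p)] {μ : Measure α}
    [IsProbabilityMeasure μ] {f : Lp E p μ} {C : ℝ} (hC : 0 ≤ C)
    (hfC : ∀ᵐ x ∂μ, ‖f x‖ ≤ C) : ‖f‖ ≤ C := by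
  simpa [measureUnivNNReal] using norm_le_of_ae_bound hC hfC

theorem isCompactOperator_smulRight {𝕜 E F : Type*} [NontriviallyNormedField 𝕜]
    [LocallyCompactSpace 𝕜] [NormedAddCommGroup E] [NormedSpace 𝕜 E]
    [NormedAddCommGroup F] [NormedSpace 𝕜 F] (φ : E →L[𝕜] 𝕜) (b : F) :
    IsCompactOperator (φ.smulRight b) :=
  (isCompactOperator_of_locallyCompactSpace_dom φ).clm_comp
    ((1 : 𝕜 →L[𝕜] 𝕜).smulRight b)

theorem integral_setIntegral_Iio_sub_mul_comm {μ : Measure ℝ} [SFinite μ] {f g : ℝ → ℝ}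
    (hf : Integrable f μ) (hg : Integrable g μ) (a : ℝ) :
    ∫ t, (∫ s in Iio (a - t), f s ∂μ) * g t ∂μ = ∫ t, f t * ∫ s in Iio (a - t), g s ∂μ ∂μ := by
  set F : ℝ → ℝ → ℝ := fun t s => {p : ℝ × ℝ | p.1 + p.2 < a}.indicator
    (fun p => g p.1 * f p.2) (t, s)
  have hF : Integrable (Function.uncurry F) (μ.prod μ) :=
    (hg.mul_prod hf).indicator (measurableSet_lt (by fun_prop) measurable_const)
  have hF_left (t s : ℝ) : F t s = (Iio (a - t)).indicator f s * g t := by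
    by_cases h : t + s < a <;> simp [F, indicator_apply, lt_sub_iff_add_lt', h, mul_comm]
  have hF_right (t s : ℝ) : F t s = f s * (Iio (a - s)).indicator g t := by
    by_cases h : t + s < a <;> simp [F, indicator_apply, lt_sub_iff_add_lt, h, mul_comm]
  calc ∫ t, (∫ s in Iio (a - t), f s ∂μ) * g t ∂μ = ∫ t, ∫ s, F t s ∂μ ∂μ := by
        simp only [hF_left, integral_mul_const, integral_indicator measurableSet_Iio]
    _ = ∫ s, ∫ t, F t s ∂μ ∂μ := integral_integral_swap hF
    _ = ∫ t, f t * ∫ s in Iio (a - t), g s ∂μ ∂μ := by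
        simp only [hF_right, integral_const_mul, integral_indicator measurableSet_Iio]

theorem integral_cos_mul_one_sub_of_cos_eq_zero {c : ℝ} (hc : cos c = 0) (t : ℝ) :
    ∫ s in (0:ℝ)..1 - t, cos (c * s) = sin c / c * cos (c * t) := by
  have hc₀ : c ≠ 0 := by rintro rfl; simp at hc
  rw [intervalIntegral.integral_comp_mul_left (fun x => cos x) hc₀, integral_cos, mul_one_sub,
    sin_sub, hc, mul_zero, sin_zero]
  simp only [zero_mul, sub_zero, smul_eq_mul]
  field_simp

theorem MeasureTheory.norm_indicatorConstLp_one_eq_sqrt {α : Type*} [MeasurableSpace α]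
    {μ : Measure α} {s : Set α} (hs : MeasurableSet s) (hμs : μ s ≠ ⊤) :
    ‖indicatorConstLp 2 hs hμs (1 : ℝ)‖ = √(μ.real s) := by
  rw [norm_indicatorConstLp two_ne_zero ENNReal.ofNat_ne_top, sqrt_eq_rpow]
  norm_num

theorem MeasureTheory.L2.real_inner_eq_integral {α : Type*} [MeasurableSpace α]
    {μ : Measure α} (u v : Lp ℝ 2 μ) : inner ℝ u v = ∫ a, u a * v a ∂μ := by
  simp only [L2.inner_def, Real.inner_apply]

namespace ReflVolterra

instance : IsProbabilityMeasure mu01 :=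
  ⟨by simp [mu01]⟩

noncomputable def kernelSlice (t : ℝ) : Lp ℝ 2 mu01 :=
  indicatorConstLp 2 (measurableSet_Iio : MeasurableSet (Iio (1 - t))) (measure_ne_top _ _) 1

theorem kernelSlice_sub {a b : ℝ} (hab : a ≤ b) :
    kernelSlice a - kernelSlice b =
      indicatorConstLp 2 measurableSet_Ico (measure_ne_top mu01 (Ico (1 - b) (1 - a))) 1 := by
  rw [sub_eq_iff_eq_add', kernelSlice, kernelSlice,
    ← indicatorConstLp_disjoint_union measurableSet_Iio measurableSet_Ico (measure_ne_top _ _)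
      (measure_ne_top _ _) ((Iio_disjoint_Ici le_rfl).mono_right Ico_subset_Ici_self)]
  congr 1
  exact (Iio_union_Ico_eq_Iio (by linarith)).symm

theorem norm_kernelSlice_le (t : ℝ) : ‖kernelSlice t‖ ≤ 1 := by
  rw [kernelSlice, norm_indicatorConstLp_one_eq_sqrt]
  exact sqrt_le_one.mpr measureReal_le_one

theorem norm_kernelSlice_sub_le {a b : ℝ} (hab : a ≤ b) :
    ‖kernelSlice a - kernelSlice b‖ ≤ √(b - a) := by
  rw [kernelSlice_sub hab, norm_indicatorConstLp_one_eq_sqrt]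
  refine sqrt_le_sqrt (ENNReal.toReal_le_of_le_ofReal (by linarith) ?_)
  calc mu01 (Ico (1 - b) (1 - a)) ≤ volume (Ico (1 - b) (1 - a)) := Measure.restrict_le_self _
    _ = ENNReal.ofReal (b - a) := by rw [volume_Ico]; ring_nf

theorem norm_kernelSlice_sub_le_sqrt_abs (a b : ℝ) :
    ‖kernelSlice a - kernelSlice b‖ ≤ √|a - b| := by
  rcases le_total a b with hab | hba
  · simpa [abs_of_nonpos (sub_nonpos.mpr hab)] using norm_kernelSlice_sub_le hab
  · simpa [norm_sub_rev, abs_of_nonneg (sub_nonneg.mpr hba)] using norm_kernelSlice_sub_le hba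

theorem continuous_kernelSlice : Continuous kernelSlice := by
  refine continuous_iff_continuousAt.mpr fun t₀ => tendsto_iff_norm_sub_tendsto_zero.mpr ?_
  refine squeeze_zero (fun _ => norm_nonneg _) (fun t => norm_kernelSlice_sub_le_sqrt_abs t t₀) ?_
  simpa using ((continuous_id.sub continuous_const).abs.sqrt.tendsto t₀ :
    Tendsto (fun t => √|t - t₀|) _ _)

noncomputable def reflPrimitive (g : Lp ℝ 2 mu01) (t : ℝ) : ℝ :=
  inner ℝ (kernelSlice t) g

theorem reflPrimitive_eq_setIntegral (g : Lp ℝ 2 mu01) (t : ℝ) :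
    reflPrimitive g t = ∫ s in Iio (1 - t), g s ∂mu01 :=
  L2.inner_indicatorConstLp_one _ _ g

theorem abs_reflPrimitive_le (g : Lp ℝ 2 mu01) (t : ℝ) : |reflPrimitive g t| ≤ ‖g‖ :=
  (abs_real_inner_le_norm _ _).trans
    (mul_le_of_le_one_left (norm_nonneg g) (norm_kernelSlice_le t))

theorem abs_reflPrimitive_sub_le (g : Lp ℝ 2 mu01) {a b : ℝ} (hab : a ≤ b) :
    |reflPrimitive g a - reflPrimitive g b| ≤ √(b - a) * ‖g‖ := by
  rw [reflPrimitive, reflPrimitive, ← inner_sub_left]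
  exact (abs_real_inner_le_norm _ _).trans
    (mul_le_mul_of_nonneg_right (norm_kernelSlice_sub_le hab) (norm_nonneg g))

theorem continuous_reflPrimitive (g : Lp ℝ 2 mu01) : Continuous (reflPrimitive g) :=
  continuous_kernelSlice.inner continuous_const

theorem memLp_reflPrimitive (g : Lp ℝ 2 mu01) : MemLp (reflPrimitive g) 2 mu01 :=
  .of_bound (continuous_reflPrimitive g).aestronglyMeasurable ‖g‖
    (Eventually.of_forall (abs_reflPrimitive_le g))

theorem setIntegral_Iio_one_sub_eq_intervalIntegral (f : ℝ → ℝ) {t : ℝ} (ht₀ : 0 ≤ t)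
    (ht₁ : t ≤ 1) : ∫ s in Iio (1 - t), f s ∂mu01 = ∫ s in (0:ℝ)..1 - t, f s := by
  rw [intervalIntegral.integral_of_le (by linarith), integral_Ioc_eq_integral_Ioo, mu01,
    Measure.restrict_restrict measurableSet_Iio, Iio_inter_Ioo, min_eq_left (by linarith)]

noncomputable def reflVolterra : Lp ℝ 2 mu01 →L[ℝ] Lp ℝ 2 mu01 :=
  LinearMap.mkContinuous
    { toFun := fun g => (memLp_reflPrimitive g).toLp
      map_add' := fun g h => by
        rw [← MemLp.toLp_add]
        exact MemLp.toLp_congr _ _ (.of_eq (by ext; simp [reflPrimitive, inner_add_right]))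
      map_smul' := fun c g => by
        rw [RingHom.id_apply, ← MemLp.toLp_const_smul]
        exact MemLp.toLp_congr _ _ (.of_eq (by ext; simp [reflPrimitive, inner_smul_right])) }
    1 fun g => by
      rw [one_mul]
      refine Lp.norm_le_of_ae_bound_of_isProbabilityMeasure (norm_nonneg g) ?_
      filter_upwards [MemLp.coeFn_toLp (memLp_reflPrimitive g)] with t ht
      simpa [ht] using abs_reflPrimitive_le g t

theorem reflVolterra_ae_eq (g : Lp ℝ 2 mu01) : reflVolterra g =ᵐ[mu01] reflPrimitive g :=
  (memLp_reflPrimitive g).coeFn_toLp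

theorem ae_mem_Ioo_mu01 : ∀ᵐ t ∂mu01, t ∈ Ioo (0:ℝ) 1 :=
  ae_restrict_mem measurableSet_Ioo

theorem reflVolterra_ae_eq_intervalIntegral (g : Lp ℝ 2 mu01) :
    reflVolterra g =ᵐ[mu01] fun t => ∫ s in (0:ℝ)..1 - t, g s := by
  filter_upwards [reflVolterra_ae_eq g, ae_mem_Ioo_mu01] with t ht ht01
  rw [ht, reflPrimitive_eq_setIntegral,
    setIntegral_Iio_one_sub_eq_intervalIntegral _ ht01.1.le ht01.2.le]

theorem inner_reflVolterra_eq_integral (g h : Lp ℝ 2 mu01) :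
    inner ℝ (reflVolterra g) h = ∫ t, (∫ s in Iio (1 - t), g s ∂mu01) * h t ∂mu01 := by
  rw [L2.real_inner_eq_integral]
  refine integral_congr_ae ?_
  filter_upwards [reflVolterra_ae_eq g] with t ht
  rw [ht, reflPrimitive_eq_setIntegral]

theorem isSelfAdjoint_reflVolterra : IsSelfAdjoint reflVolterra := by
  have hint (u : Lp ℝ 2 mu01) : Integrable u mu01 := (Lp.memLp u).integrable one_le_two
  rw [ContinuousLinearMap.isSelfAdjoint_iff_isSymmetric]
  intro g h
  calc inner ℝ (reflVolterra g) h = ∫ t, (∫ s in Iio (1 - t), g s ∂mu01) * h t ∂mu01 :=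
        inner_reflVolterra_eq_integral g h
    _ = ∫ t, g t * ∫ s in Iio (1 - t), h s ∂mu01 ∂mu01 :=
        integral_setIntegral_Iio_sub_mul_comm (hint g) (hint h) 1
    _ = inner ℝ (reflVolterra h) g := by
        simp_rw [inner_reflVolterra_eq_integral, mul_comm]
    _ = inner ℝ g (reflVolterra h) := real_inner_comm _ _

noncomputable def stepIndicator (n i : ℕ) : Lp ℝ 2 mu01 :=
  indicatorConstLp 2
    ((measurable_id.const_mul (n : ℝ)).nat_floor (measurableSet_singleton i) :
      MeasurableSet {t : ℝ | ⌊n * t⌋₊ = i})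
    (measure_ne_top _ _) 1

noncomputable def stepApprox (n : ℕ) : Lp ℝ 2 mu01 →L[ℝ] Lp ℝ 2 mu01 :=
  ∑ i ∈ Finset.range n, (innerSL ℝ (kernelSlice (i / n))).smulRight (stepIndicator n i)

theorem isCompactOperator_stepApprox (n : ℕ) : IsCompactOperator (stepApprox n) :=
  Submodule.sum_mem (compactOperator (RingHom.id ℝ) _ _) fun _ _ =>
    isCompactOperator_smulRight _ _

theorem stepIndicator_ae_eq (n i : ℕ) :
    stepIndicator n i =ᵐ[mu01] {t : ℝ | ⌊n * t⌋₊ = i}.indicator 1 :=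
  indicatorConstLp_coeFn

theorem stepApprox_ae_eq (n : ℕ) (g : Lp ℝ 2 mu01) :
    stepApprox n g =ᵐ[mu01] fun t => ∑ i ∈ Finset.range n,
      {t : ℝ | ⌊n * t⌋₊ = i}.indicator (fun _ => reflPrimitive g (i / n)) t := by
  have hterm (i : ℕ) : reflPrimitive g (i / n) • stepIndicator n i =ᵐ[mu01]
      {t : ℝ | ⌊n * t⌋₊ = i}.indicator (fun _ => reflPrimitive g (i / n)) := by
    filter_upwards [Lp.coeFn_smul (reflPrimitive g (i / n)) (stepIndicator n i),
      stepIndicator_ae_eq n i] with t hsmul hind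
    simp [hsmul, hind, indicator_apply]
  have hsum : stepApprox n g =
      ∑ i ∈ Finset.range n, reflPrimitive g (i / n) • stepIndicator n i := by
    simp [stepApprox, reflPrimitive]
  rw [hsum]
  refine (Lp.coeFn_fun_finsetSum _ _).trans ?_
  filter_upwards [(Finset.eventually_all _).mpr fun i (_ : i ∈ Finset.range n) => hterm i]
    with t ht
  exact Finset.sum_congr rfl ht

theorem abs_reflPrimitive_sub_floor_le (g : Lp ℝ 2 mu01) {n : ℕ} (hn : 0 < n) {t : ℝ}
    (ht : 0 ≤ t) : |reflPrimitive g t - reflPrimitive g (⌊n * t⌋₊ / n)| ≤ √(1 / n) * ‖g‖ := by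
  have hn' : (0 : ℝ) < n := Nat.cast_pos.mpr hn
  have hfloor_le : (⌊n * t⌋₊ : ℝ) ≤ n * t := Nat.floor_le (by positivity)
  have hlt_floor : n * t < ⌊n * t⌋₊ + 1 := Nat.lt_floor_add_one _
  rw [abs_sub_comm]
  refine (abs_reflPrimitive_sub_le g ((div_le_iff₀ hn').mpr (by linarith))).trans ?_
  gcongr
  rw [sub_le_iff_le_add, ← add_div, le_div_iff₀ hn']
  linarith

theorem norm_reflVolterra_sub_stepApprox_le {n : ℕ} (hn : 0 < n) :
    ‖reflVolterra - stepApprox n‖ ≤ √(1 / n) := by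
  refine ContinuousLinearMap.opNorm_le_bound _ (sqrt_nonneg _) fun g => ?_
  refine Lp.norm_le_of_ae_bound_of_isProbabilityMeasure (by positivity) ?_
  filter_upwards [Lp.coeFn_sub (reflVolterra g) (stepApprox n g), reflVolterra_ae_eq g,
    stepApprox_ae_eq n g, ae_mem_Ioo_mu01] with t hsub hT hS ht
  have hn' : (0 : ℝ) < n := Nat.cast_pos.mpr hn
  have hfloor : ⌊n * t⌋₊ < n :=
    (Nat.floor_lt (mul_nonneg hn'.le ht.1.le)).mpr (mul_lt_of_lt_one_right hn' ht.2)
  rw [sub_apply, hsub, Pi.sub_apply, hT, hS, Real.norm_eq_abs]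
  simpa [indicator_apply, hfloor] using abs_reflPrimitive_sub_floor_le g hn ht.1.le

theorem tendsto_stepApprox : Tendsto stepApprox atTop (𝓝 reflVolterra) := by
  rw [tendsto_iff_norm_sub_tendsto_zero]
  have hbound : Tendsto (fun n : ℕ => √(1 / n)) atTop (𝓝 0) := by
    have := (continuous_sqrt.tendsto 0).comp tendsto_one_div_atTop_nhds_zero_nat
    rwa [sqrt_zero] at this
  refine squeeze_zero' (Eventually.of_forall fun n => norm_nonneg _) ?_ hbound
  filter_upwards [eventually_gt_atTop 0] with n hn
  rw [norm_sub_rev]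
  exact norm_reflVolterra_sub_stepApprox_le hn

theorem isCompactOperator_reflVolterra : IsCompactOperator reflVolterra :=
  isCompactOperator_of_tendsto tendsto_stepApprox
    (Eventually.of_forall isCompactOperator_stepApprox)

theorem eqOn_Icc_of_ae_eq_mu01 {f g : ℝ → ℝ} (hf : Continuous f) (hg : Continuous g)
    (hfg : f =ᵐ[mu01] g) : EqOn f g (Icc 0 1) := by
  rw [← closure_Ioo zero_ne_one]
  exact (Measure.eqOn_open_of_ae_eq hfg isOpen_Ioo hf.continuousOn hg.continuousOn).closure hf hg

theorem memLp_cos_mul (c : ℝ) : MemLp (fun t => cos (c * t)) 2 mu01 :=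
  .of_bound (by fun_prop : Continuous _).aestronglyMeasurable 1
    (Eventually.of_forall fun t => by simpa using abs_cos_le_one _)

noncomputable def cosLp (c : ℝ) : Lp ℝ 2 mu01 := (memLp_cos_mul c).toLp

theorem cosLp_ae_eq (c : ℝ) : cosLp c =ᵐ[mu01] fun t => cos (c * t) :=
  (memLp_cos_mul c).coeFn_toLp

theorem cosLp_ne_zero (c : ℝ) : cosLp c ≠ 0 := by
  intro h
  have hzero : (fun t => cos (c * t)) =ᵐ[mu01] 0 :=
    (cosLp_ae_eq c).symm.trans (by rw [h]; exact Lp.coeFn_zero ℝ 2 mu01)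
  have h0 : cos (c * 0) = 0 := eqOn_Icc_of_ae_eq_mu01 (by fun_prop) continuous_const hzero
    (left_mem_Icc.mpr zero_le_one)
  simp at h0

theorem reflVolterra_cosLp {c : ℝ} (hc : cos c = 0) :
    reflVolterra (cosLp c) = (sin c / c) • cosLp c := by
  ext1
  filter_upwards [reflVolterra_ae_eq (cosLp c), Lp.coeFn_smul (sin c / c) (cosLp c),
    cosLp_ae_eq c, ae_mem_Ioo_mu01] with t hT hsmul hcos ht
  rw [hT, hsmul, reflPrimitive_eq_setIntegral, Pi.smul_apply, hcos, smul_eq_mul,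
    integral_congr_ae (ae_restrict_of_ae (cosLp_ae_eq c)),
    setIntegral_Iio_one_sub_eq_intervalIntegral _ ht.1.le ht.2.le,
    integral_cos_mul_one_sub_of_cos_eq_zero hc]

end ReflVolterra

/-- There is a (bounded linear) operator `T` on `L²(0,1)` with
`(Tg)(t) = ∫_0^{1-t} g(s) ds`; it is compact and self-adjoint, and for every
`k ∈ ℤ` the function `t ↦ cos(π(4k+1)t/2)` is an eigenfunction of `T` with
eigenvalue `2/(π(4k+1))`. -/
theorem operator_T_compact_selfAdjoint_eigen :
    ∃ T : Lp ℝ 2 mu01 →L[ℝ] Lp ℝ 2 mu01,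
      (∀ g : Lp ℝ 2 mu01,
        (T g : ℝ → ℝ) =ᵐ[mu01] fun t => ∫ s in (0:ℝ)..(1 - t), g s) ∧
      IsCompactOperator T ∧
      IsSelfAdjoint T ∧
      ∀ k : ℤ, ∃ g : Lp ℝ 2 mu01, g ≠ 0 ∧
        (g : ℝ → ℝ) =ᵐ[mu01] (fun t => Real.cos (π * (4 * k + 1) * t / 2)) ∧
        T g = (2 / (π * (4 * k + 1))) • g := by
  open ReflVolterra in
  refine ⟨reflVolterra, reflVolterra_ae_eq_intervalIntegral, isCompactOperator_reflVolterra,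
    isSelfAdjoint_reflVolterra, fun k => ⟨cosLp (π * (4 * k + 1) / 2), cosLp_ne_zero _, ?_, ?_⟩⟩
  · filter_upwards [cosLp_ae_eq (π * (4 * k + 1) / 2)] with t ht
    rw [ht]
    ring_nf
  · have hc : π * (4 * k + 1) / 2 = π / 2 + k * (2 * π) := by ring
    rw [reflVolterra_cosLp (by rw [hc, cos_add_int_mul_two_pi, cos_pi_div_two]), hc,
      sin_add_int_mul_two_pi, sin_pi_div_two, ← hc, one_div_div]
end

section
/- For every n ≥ 3, vol(C_n) = ∫_0^1 𝒦_n(t,t) dt, where 𝒦_n is the n-fold iterated kernel defined by 𝒦_1(s,t) = 1 if s+t ≤ 1 and 0 otherwise, and 𝒦_n(t,s) = ∫_0^1 𝒦_1(t,x)·𝒦_{n−1}(x,s) dx for n ≥ 2. -/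
open MeasureTheory

/-- The cycle `C_n` on vertex set `{1,…,n}` with edges `i(i+1)` (cyclically, mod n). -/
def cycG (n : ℕ) : SimpleGraph (Fin n) :=
  SimpleGraph.fromRel (fun i j => ((i : ℕ) + 1) % n = (j : ℕ))

/-- The kernel `𝒦₁(s,t) = 1` if `s + t ≤ 1` and `0` otherwise. -/
noncomputable def K1 (t s : ℝ) : ℝ := if t + s ≤ 1 then 1 else 0

/-- The iterated kernels: `𝒦_n(t,s) = ∫_0^1 𝒦₁(t,x)·𝒦_{n-1}(x,s) dx` for `n ≥ 2`. -/
noncomputable def iterK : ℕ → ℝ → ℝ → ℝ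
  | 0 => fun _ _ => 0
  | 1 => K1
  | n + 2 => fun t s => ∫ x in (0:ℝ)..1, K1 t x * iterK (n + 1) x s

/-!
The indicator of `P(C_n)` inside the unit cube is the cyclic product `∏ᵢ 𝒦₁(xᵢ, xᵢ₊₁)`.
Fixing `x₀ = t` turns the cycle into the path `t, x₁, …, x_{n-1}, t`, and integrating out the
inner vertices one at a time by Fubini produces exactly the iterated kernel `𝒦_n(t, t)`.
-/

local notation "μI" => volume.restrict (Set.Icc (0:ℝ) 1)

namespace MeasureTheory

theorem integral_pi_fin_succ_cons {α E : Type*} [MeasurableSpace α] [NormedAddCommGroup E]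
    [NormedSpace ℝ E] {m : ℕ} (μ : Measure α) [SigmaFinite μ]
    {f : (Fin (m + 1) → α) → E} (hf : Integrable f (Measure.pi fun _ => μ)) :
    ∫ x, f x ∂(Measure.pi fun _ => μ) =
      ∫ a, ∫ y, f (Fin.cons a y) ∂(Measure.pi fun _ => μ) ∂μ := by
  have e := (measurePreserving_piFinSuccAbove (fun _ : Fin (m + 1) => μ) 0).symm
  rw [← e.integral_comp', integral_prod]
  · simp [MeasurableEquiv.piFinSuccAbove_symm_apply, Fin.insertNthEquiv, Fin.insertNth_zero']
  · exact (e.integrable_comp_emb (MeasurableEquiv.measurableEmbedding _)).2 hf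

end MeasureTheory

lemma measurable_K1 : Measurable fun p : ℝ × ℝ => K1 p.1 p.2 :=
  Measurable.ite (measurableSet_le (by fun_prop) measurable_const) measurable_const
    measurable_const

lemma integrable_prod_K1 {X ι : Type*} [MeasurableSpace X] {μ : Measure X} [IsFiniteMeasure μ]
    (s : Finset ι) {f g : ι → X → ℝ} (hf : ∀ i, Measurable (f i)) (hg : ∀ i, Measurable (g i)) :
    Integrable (fun x => ∏ i ∈ s, K1 (f i x) (g i x)) μ := by
  refine Integrable.of_bound (Finset.measurable_prod _ fun i _ =>
    measurable_K1.comp ((hf i).prodMk (hg i))).aestronglyMeasurable 1 (ae_of_all _ fun x => ?_)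
  rw [norm_prod]
  exact Finset.prod_le_one (fun _ _ => norm_nonneg _) fun i _ => by
    unfold K1; split_ifs <;> simp

lemma intervalIntegral_zero_one_eq_integral (f : ℝ → ℝ) :
    ∫ t in (0:ℝ)..1, f t = ∫ t, f t ∂μI := by
  rw [intervalIntegral.integral_of_le zero_le_one, integral_Icc_eq_integral_Ioc]

/-- `𝒦₁(t, x₀) 𝒦₁(x₀, x₁) ⋯ 𝒦₁(x_{m-1}, s)`, the weight of the path `t, x₀, …, x_{m-1}, s`. -/
noncomputable def kernelPath (m : ℕ) (t s : ℝ) (x : Fin m → ℝ) : ℝ :=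
  ∏ i : Fin (m + 1),
    K1 ((Fin.cons t x : Fin (m + 1) → ℝ) i) ((Fin.snoc x s : Fin (m + 1) → ℝ) i)

lemma kernelPath_cons (m : ℕ) (t s a : ℝ) (y : Fin m → ℝ) :
    kernelPath (m + 1) t s (Fin.cons a y) = K1 t a * kernelPath m a s y := by
  rw [kernelPath, kernelPath, Fin.prod_univ_succ, ← Fin.cons_snoc_eq_snoc_cons]
  simp

lemma kernelPath_self (m : ℕ) (a : ℝ) (y : Fin m → ℝ) :
    kernelPath m a a y =
      ∏ i, K1 ((Fin.cons a y : Fin (m + 1) → ℝ) i)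
        ((Fin.cons a y : Fin (m + 1) → ℝ) (i + 1)) := by
  simp [kernelPath, Fin.snoc_eq_cons_rotate, finRotate_apply]

lemma integral_kernelPath (m : ℕ) (t s : ℝ) :
    ∫ y, kernelPath m t s y ∂(Measure.pi fun _ => μI) = iterK (m + 1) t s := by
  induction m generalizing t with
  | zero => simp [kernelPath, iterK, Fin.snoc, measureReal_def]
  | succ m ih =>
    have hint : Integrable (kernelPath (m + 1) t s) (Measure.pi fun _ => μI) :=
      integrable_prod_K1 _ (fun _ => by fun_prop) fun _ => by fun_prop
    simp only [integral_pi_fin_succ_cons _ hint, iterK, intervalIntegral_zero_one_eq_integral,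
      kernelPath_cons, integral_const_mul, ih]

lemma cycG_adj_iff {m : ℕ} {i j : Fin (m + 2)} :
    (cycG (m + 2)).Adj i j ↔ j = i + 1 ∨ i = j + 1 := by
  have hsucc : ∀ i j : Fin (m + 2), ((i : ℕ) + 1) % (m + 2) = j ↔ j = i + 1 := fun i j => by
    rw [Fin.ext_iff, Fin.val_add, Fin.val_one, eq_comm]
  simp only [cycG, SimpleGraph.fromRel_adj, hsucc]
  refine ⟨And.right, fun h => ⟨?_, h⟩⟩
  rcases h with rfl | rfl <;> simp

lemma cycG_polytope_eq (m : ℕ) :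
    {x : Fin (m + 2) → ℝ | (∀ i, x i ∈ Set.Icc (0:ℝ) 1) ∧
      ∀ ⦃i j⦄, (cycG (m + 2)).Adj i j → x i + x j ≤ 1} =
      {x | ∀ i, x i + x (i + 1) ≤ 1} ∩ Set.univ.pi fun _ => Set.Icc 0 1 := by
  ext x
  simp only [Set.mem_ofPred_eq, Set.mem_inter_iff, Set.mem_univ_pi, cycG_adj_iff]
  constructor
  · exact fun ⟨hbox, hadj⟩ => ⟨fun i => hadj (.inl rfl), hbox⟩
  · rintro ⟨hcyc, hbox⟩
    refine ⟨hbox, fun i j => ?_⟩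
    rintro (rfl | rfl)
    exacts [hcyc i, (add_comm _ _).trans_le (hcyc j)]

lemma gvol_cycG_eq_integral (m : ℕ) :
    gvol (cycG (m + 2)) =
      ∫ x : Fin (m + 2) → ℝ, ∏ i, K1 (x i) (x (i + 1)) ∂(Measure.pi fun _ => μI) := by
  have hC : MeasurableSet {x : Fin (m + 2) → ℝ | ∀ i, x i + x (i + 1) ≤ 1} := by measurability
  rw [gvol, cycG_polytope_eq,
    ← Measure.restrict_apply' (MeasurableSet.univ_pi fun _ => measurableSet_Icc), volume_pi,
    Measure.restrict_pi_pi, ← measureReal_def, ← integral_indicator_one hC]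
  congr 1 with x
  simp [Set.indicator_apply, K1, Finset.prod_boole]

/-- For `n ≥ 3`, `vol(C_n) = ∫_0^1 𝒦_n(t,t) dt`. -/
theorem vol_cycle_trace (n : ℕ) (hn : 3 ≤ n) :
    gvol (cycG n) = ∫ t in (0:ℝ)..1, iterK n t t := by
  obtain ⟨m, rfl⟩ : ∃ m, n = m + 2 := ⟨n - 2, by omega⟩
  rw [gvol_cycG_eq_integral,
    integral_pi_fin_succ_cons _ (integrable_prod_K1 _ (fun _ => by fun_prop) fun _ => by fun_prop),
    intervalIntegral_zero_one_eq_integral]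
  simp only [← kernelPath_self, integral_kernelPath]
end
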